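/- arXiv:2205.09072 — 6 statements merged into one kernel-verified Lean document; each statement's English description precedes it below -/
import Mathlib

section
/- Let S = {(x_i, y_i)}_{i=1}^n ⊆ ℝ × {−1,1} be a dataset with x_1 < x_2 < … < x_n, and suppose θ = (w, b, v) satisfies the KKT conditions of the maximum-margin problem for a width-k depth-2 ReLU network on S. Let 1 ≤ a < b ≤ n be such that x_b > x_a ≥ 0 and y_i = −1 for all a ≤ i ≤ b, and let ℐ'_{a,b} = {i : a ≤ i ≤ b, y_i N_θ(x_i) = 1} be enumerated as i_1 < … < i_m. Then there are at most 2 indices ℓ ∈ [m−1] such that N_θ(x) < −1 for some x ∈ [x_{i_ℓ}, x_{i_{ℓ+1}}]. -/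
open Finset

/-- The ReLU activation function. -/
noncomputable def relu (z : ℝ) : ℝ := max 0 z

/-- A width-`k` depth-2 ReLU network with weights `w`, biases `b`, output weights `v`. -/
noncomputable def NNet {k : ℕ} (w b v : Fin k → ℝ) (x : ℝ) : ℝ :=
  ∑ j : Fin k, v j * relu (w j * x + b j)

/-- `θ = (w, b, v)` satisfies the KKT conditions of the maximum-margin problem
for the dataset `(x i, y i)`. -/
def IsKKT {n k : ℕ} (x y : Fin n → ℝ) (w b v : Fin k → ℝ) : Prop :=
  (∀ i, 1 ≤ y i * NNet w b v (x i)) ∧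
  ∃ (lam : Fin n → ℝ) (sg : Fin n → Fin k → ℝ),
    (∀ i, 0 ≤ lam i) ∧
    (∀ i j, sg i j ∈ Set.Icc (0 : ℝ) 1) ∧
    (∀ i j, 0 < w j * x i + b j → sg i j = 1) ∧
    (∀ i j, w j * x i + b j < 0 → sg i j = 0) ∧
    (∀ i, y i * NNet w b v (x i) ≠ 1 → lam i = 0) ∧
    (∀ j, v j ≠ 0 → w j = ∑ i, lam i * y i * v j * sg i j * x i) ∧
    (∀ j, v j ≠ 0 → b j = ∑ i, lam i * y i * v j * sg i j)

/-- `f` is locally affine at `x`: it agrees with an affine function on a neighborhood of `x`. -/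
def LocallyAffineAt (f : ℝ → ℝ) (x : ℝ) : Prop :=
  ∃ c d : ℝ, ∀ᶠ z in nhds x, f z = c * z + d

/-- `x` is an activation point of the network `(w, b, v)`. -/
def IsActivationPoint {k : ℕ} (w b v : Fin k → ℝ) (x : ℝ) : Prop :=
  ∃ j : Fin k, v j ≠ 0 ∧ w j ≠ 0 ∧ w j * x + b j = 0

/-- The derivative of `f` decreases at `x`: for all sufficiently small `ε > 0`,
the derivative at `x + ε` is smaller than the derivative at `x - ε`. -/
def DerivDecreasesAt (f : ℝ → ℝ) (x : ℝ) : Prop :=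
  ∃ ε₀ > (0 : ℝ), ∀ ε : ℝ, 0 < ε → ε < ε₀ → deriv f (x + ε) < deriv f (x - ε)

/-- The derivative of `f` increases at `x`: for all sufficiently small `ε > 0`,
the derivative at `x - ε` is smaller than the derivative at `x + ε`. -/
def DerivIncreasesAt (f : ℝ → ℝ) (x : ℝ) : Prop :=
  ∃ ε₀ > (0 : ℝ), ∀ ε : ℝ, 0 < ε → ε < ε₀ → deriv f (x - ε) < deriv f (x + ε)

/-!
Between two consecutive margin points `N_θ = -1`, and `N_θ` is concave on any interval that
contains no kink of a neuron with positive output weight, so an interval on which `N_θ` dips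
below `-1` contains such a kink. At a kink `t` of a neuron `j` with `v_j > 0`, `w_j > 0` on which
no support point sits, stationarity reads
  `∑_{x_i > t} λ_i y_i (x_i t + 1) = (w_j t + b_j) / v_j = 0`,
  `∑_{x_i > t} λ_i y_i x_i = w_j / v_j > 0`.
For two such kinks `0 < t < t'` with only negative labels in between, the first identity at `t`
follows from the ones at `t'` up to a strictly negative correction, a contradiction. So each sign
of `w_j` accounts for at most one interval.
-/

lemma convexOn_relu_affine (W B : ℝ) {S : Set ℝ} (hS : Convex ℝ S) :
    ConvexOn ℝ S (fun z => relu (W * z + B)) :=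
  (convexOn_const 0 hS).sup (((LinearMap.mulLeft ℝ W).convexOn hS).add_const B)

lemma concaveOn_affine (W B : ℝ) {S : Set ℝ} (hS : Convex ℝ S) :
    ConcaveOn ℝ S (fun z => W * z + B) :=
  ((LinearMap.mulLeft ℝ W).concaveOn hS).add_const B

lemma concaveOn_relu_affine_Icc {p q W B : ℝ} (hkink : ∀ s ∈ Set.Ioo p q, W * s + B = 0 → W = 0) :
    ConcaveOn ℝ (Set.Icc p q) (fun z => relu (W * z + B)) := by
  by_cases hpos : ∀ z ∈ Set.Icc p q, 0 ≤ W * z + B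
  · exact (concaveOn_affine W B (convex_Icc p q)).congr fun z hz => (max_eq_right (hpos z hz)).symm
  by_cases hneg : ∀ z ∈ Set.Icc p q, W * z + B ≤ 0
  · exact (concaveOn_const 0 (convex_Icc p q)).congr fun z hz => (max_eq_left (hneg z hz)).symm
  push Not at hpos hneg
  obtain ⟨z₁, ⟨hpz₁, hz₁q⟩, hz₁⟩ := hpos
  obtain ⟨z₂, ⟨hpz₂, hz₂q⟩, hz₂⟩ := hneg
  have hW : W ≠ 0 := by rintro rfl; linarith
  set s := -B / W
  have hs : ∀ z, W * z + B = W * (z - s) := fun z => by simp only [s]; field_simp; ring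
  rw [hs] at hz₁ hz₂
  refine absurd (hkink s ?_ (by rw [hs, sub_self, mul_zero])) hW
  rcases mul_neg_iff.1 hz₁ with ⟨h₁, h₁'⟩ | ⟨h₁, h₁'⟩ <;>
    rcases mul_pos_iff.1 hz₂ with ⟨h₂, h₂'⟩ | ⟨h₂, h₂'⟩ <;> constructor <;> linarith

lemma concaveOn_finset_sum {𝕜 E β ι : Type*} [Semiring 𝕜] [PartialOrder 𝕜] [AddCommMonoid E]
    [AddCommMonoid β] [PartialOrder β] [IsOrderedAddMonoid β] [SMul 𝕜 E] [Module 𝕜 β]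
    {S : Set E} (hS : Convex 𝕜 S) (s : Finset ι) {f : ι → E → β}
    (hf : ∀ i ∈ s, ConcaveOn 𝕜 S (f i)) :
    ConcaveOn 𝕜 S (fun z => ∑ i ∈ s, f i z) := by
  classical
  induction s using Finset.induction with
  | empty => simpa using concaveOn_const 0 hS
  | insert i s hi ih =>
    simp only [Finset.sum_insert hi]
    exact (hf i (mem_insert_self i s)).add (ih fun j hj => hf j (mem_insert_of_mem hj))

lemma concaveOn_nnet_Icc {k : ℕ} {w b v : Fin k → ℝ} {p q : ℝ}
    (hkink : ∀ j, 0 < v j → ∀ s ∈ Set.Ioo p q, w j * s + b j = 0 → w j = 0) :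
    ConcaveOn ℝ (Set.Icc p q) (NNet w b v) := by
  refine concaveOn_finset_sum (convex_Icc p q) univ fun j _ => ?_
  rcases le_or_gt (v j) 0 with hv | hv
  · have := ((convexOn_relu_affine (w j) (b j) (convex_Icc p q)).smul (neg_nonneg.2 hv)).neg
    exact this.congr fun z _ => by simp [smul_eq_mul]
  · exact (concaveOn_relu_affine_Icc (hkink j hv)).smul hv.le

lemma exists_kink_of_nnet_lt_min {k : ℕ} {w b v : Fin k → ℝ} {p q z : ℝ}
    (hz : z ∈ Set.Icc p q) (hlt : NNet w b v z < min (NNet w b v p) (NNet w b v q)) :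
    ∃ j, 0 < v j ∧ w j ≠ 0 ∧ ∃ s ∈ Set.Ioo p q, w j * s + b j = 0 := by
  by_contra! h
  have hpq : p ≤ q := hz.1.trans hz.2
  refine hlt.not_ge ((concaveOn_nnet_Icc fun j hv s hs hks => ?_).ge_on_segment
    (Set.left_mem_Icc.2 hpq) (Set.right_mem_Icc.2 hpq) (by rwa [segment_eq_Icc hpq]))
  by_contra hw
  exact h j hv hw s hs hks

lemma StrictMono.apply_notMem_Ioo_succ {α : Type*} [Preorder α] {m : ℕ} {f : Fin m → α}
    (hf : StrictMono f) {ℓ : ℕ} (h : ℓ + 1 < m) (r : Fin m) :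
    f r ∉ Set.Ioo (f ⟨ℓ, Nat.lt_of_succ_lt h⟩) (f ⟨ℓ + 1, h⟩) := by
  rintro ⟨h₁, h₂⟩
  have h₁ := Fin.lt_def.1 (hf.lt_iff_lt.1 h₁)
  have h₂ := Fin.lt_def.1 (hf.lt_iff_lt.1 h₂)
  simp only at h₁ h₂
  omega

section Stationarity

variable {ι : Type*} [Fintype ι] {x μ σ : ι → ℝ} {W B V : ℝ}

lemma sum_mul_activation_eq_sum_filter (g : ι → ℝ)
    (hσpos : ∀ i, 0 < W * x i + B → σ i = 1) (hσneg : ∀ i, W * x i + B < 0 → σ i = 0)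
    (hμ : ∀ i, W * x i + B = 0 → μ i = 0) :
    ∑ i, μ i * σ i * g i = ∑ i with 0 < W * x i + B, μ i * g i := by
  rw [sum_filter]
  refine sum_congr rfl fun i _ => ?_
  rcases lt_trichotomy (W * x i + B) 0 with h | h | h
  · simp [hσneg i h, h.not_gt]
  · simp [hμ i h]
  · simp [hσpos i h, h]

lemma sums_of_rising_kink {s : ℝ} (hV : 0 < V) (hW : 0 < W) (hs : W * s + B = 0)
    (hσpos : ∀ i, 0 < W * x i + B → σ i = 1) (hσneg : ∀ i, W * x i + B < 0 → σ i = 0)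
    (hμ : ∀ i, x i = s → μ i = 0)
    (hWeq : W = ∑ i, μ i * V * σ i * x i) (hBeq : B = ∑ i, μ i * V * σ i) :
    0 < ∑ i with s < x i, μ i * x i ∧ ∑ i with s < x i, μ i * (x i * s + 1) = 0 := by
  have hact : ∀ i, 0 < W * x i + B ↔ s < x i := fun i => by
    rw [show W * x i + B = W * (x i - s) by linear_combination hs, mul_pos_iff_of_pos_left hW,
      sub_pos]
  have hμ' : ∀ i, W * x i + B = 0 → μ i = 0 := fun i h => hμ i <| by
    have : W * (x i - s) = 0 := by linear_combination h - hs
    linarith [(mul_eq_zero.1 this).resolve_left hW.ne']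
  have hsum : ∀ g : ι → ℝ, ∑ i, μ i * V * σ i * g i = V * ∑ i with s < x i, μ i * g i := by
    intro g
    rw [sum_mul_activation_eq_sum_filter (μ := fun i => μ i * V) g hσpos hσneg
      fun i h => by simp [hμ' i h], mul_sum]
    simp_rw [hact]
    exact sum_congr rfl fun i _ => by ring
  have hWsum := hsum x
  have hBsum := hsum 1
  simp only [Pi.one_apply, mul_one] at hBsum
  rw [← hWeq] at hWsum
  rw [← hBeq] at hBsum
  refine ⟨pos_of_mul_pos_right (hWsum ▸ hW) hV.le, ?_⟩
  have : V * ∑ i with s < x i, μ i * (x i * s + 1) = W * s + B := by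
    rw [hWsum, hBsum, mul_sum, mul_sum, mul_sum, sum_mul, ← sum_add_distrib]
    exact sum_congr rfl fun i _ => by ring
  rw [hs] at this
  exact (mul_eq_zero.1 this).resolve_left hV.ne'

end Stationarity

lemma sum_filter_lt_mul_add_one_neg {ι : Type*} [Fintype ι] {x μ : ι → ℝ} {t t' : ℝ}
    (htt' : t < t') (hslope : 0 < ∑ i with t' < x i, μ i * x i)
    (hkink : ∑ i with t' < x i, μ i * (x i * t' + 1) = 0)
    (hmid : ∀ i, t < x i → x i ≤ t' → μ i * (x i * t + 1) ≤ 0) :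
    ∑ i with t < x i, μ i * (x i * t + 1) < 0 := by
  have hsplit : ({i | t < x i} : Finset ι).filter (fun i => t' < x i)
      = ({i | t' < x i} : Finset ι) := by
    ext i; simp only [mem_filter, mem_univ, true_and, and_iff_right_iff_imp]
    exact htt'.trans
  have hupper : ∑ i with t' < x i, μ i * (x i * t + 1)
      = ∑ i with t' < x i, μ i * (x i * t' + 1) + (t - t') * ∑ i with t' < x i, μ i * x i := by
    rw [mul_sum, ← sum_add_distrib]
    exact sum_congr rfl fun i _ => by ring
  have hlower : ∑ i ∈ ({i | t < x i} : Finset ι).filter (fun i => ¬ t' < x i),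
      μ i * (x i * t + 1) ≤ 0 := by
    refine sum_nonpos fun i hi => ?_
    simp only [mem_filter, mem_univ, true_and, not_lt] at hi
    exact hmid i hi.1 hi.2
  rw [← sum_filter_add_sum_filter_not _ (fun i => t' < x i), hsplit, hupper, hkink]
  nlinarith

section TwoKinks

variable {ι κ : Type*} [Fintype ι] {x y lam : ι → ℝ} {w b v : κ → ℝ} {sg : ι → κ → ℝ}
  {t t' : ℝ} {j j' : κ}

lemma false_of_two_rising_kinks
    (hsgp : ∀ i j, 0 < w j * x i + b j → sg i j = 1)
    (hsgn : ∀ i j, w j * x i + b j < 0 → sg i j = 0)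
    (hw : ∀ j, v j ≠ 0 → w j = ∑ i, lam i * y i * v j * sg i j * x i)
    (hb : ∀ j, v j ≠ 0 → b j = ∑ i, lam i * y i * v j * sg i j)
    (htt' : t < t') (hsupp : ∀ i, x i = t ∨ x i = t' → lam i = 0)
    (hmid : ∀ i, t < x i → x i ≤ t' → lam i * y i * (x i * t + 1) ≤ 0)
    (hv : 0 < v j) (hwj : 0 < w j) (hkink : w j * t + b j = 0)
    (hv' : 0 < v j') (hwj' : 0 < w j') (hkink' : w j' * t' + b j' = 0) : False := by
  have hlow := (sums_of_rising_kink (μ := fun i => lam i * y i) hv hwj hkink (hsgp · j)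
    (hsgn · j) (fun i hi => by simp [hsupp i (.inl hi)]) (hw j hv.ne') (hb j hv.ne')).2
  obtain ⟨hslope, hhigh⟩ := sums_of_rising_kink (μ := fun i => lam i * y i) hv' hwj' hkink'
    (hsgp · j') (hsgn · j') (fun i hi => by simp [hsupp i (.inr hi)]) (hw j' hv'.ne')
    (hb j' hv'.ne')
  exact (sum_filter_lt_mul_add_one_neg htt' hslope hhigh hmid).ne hlow

lemma false_of_two_kinks_of_same_sign (hlam : ∀ i, 0 ≤ lam i)
    (hsgp : ∀ i j, 0 < w j * x i + b j → sg i j = 1)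
    (hsgn : ∀ i j, w j * x i + b j < 0 → sg i j = 0)
    (hw : ∀ j, v j ≠ 0 → w j = ∑ i, lam i * y i * v j * sg i j * x i)
    (hb : ∀ j, v j ≠ 0 → b j = ∑ i, lam i * y i * v j * sg i j)
    (ht : 0 < t) (htt' : t < t') (hy : ∀ i, x i ∈ Set.Icc t t' → y i = -1)
    (hsupp : ∀ i, x i = t ∨ x i = t' → lam i = 0)
    (hv : 0 < v j) (hkink : w j * t + b j = 0) (hv' : 0 < v j') (hkink' : w j' * t' + b j' = 0)
    (hsign : 0 < w j * w j') : False := by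
  have hmid : ∀ i, x i ∈ Set.Icc t t' → ∀ s ∈ Set.Icc t t', lam i * y i * (x i * s + 1) ≤ 0 :=
    fun i hi s hs => by
      have : 0 < x i * s := mul_pos (ht.trans_le hi.1) (ht.trans_le hs.1)
      rw [hy i hi]
      nlinarith [hlam i]
  rcases mul_pos_iff.1 hsign with ⟨hwj, hwj'⟩ | ⟨hwj, hwj'⟩
  · exact false_of_two_rising_kinks hsgp hsgn hw hb htt' hsupp
      (fun i h₁ h₂ => hmid i ⟨h₁.le, h₂⟩ t ⟨le_rfl, htt'.le⟩) hv hwj hkink hv' hwj' hkink'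
  · -- the reflection `x ↦ -x`, `w ↦ -w` turns falling kinks into rising ones
    refine false_of_two_rising_kinks (x := -x) (w := -w) (t := -t') (t' := -t)
      (fun i j h => hsgp i j (by simpa using h)) (fun i j h => hsgn i j (by simpa using h))
      (fun j hj => by simp [hw j hj]) hb (neg_lt_neg htt')
      (fun i h => hsupp i (by simpa [or_comm] using h))
      (fun i h₁ h₂ => ?_) hv' (by simpa using hwj') (by simpa using hkink') hv
      (by simpa using hwj) (by simpa using hkink)
    simp only [Pi.neg_apply, neg_mul_neg]
    simp only [Pi.neg_apply, neg_lt_neg_iff, neg_le_neg_iff] at h₁ h₂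
    exact hmid i ⟨h₂, h₁.le⟩ t' ⟨htt'.le, le_rfl⟩

end TwoKinks

def kinkIntervals {κ : Type*} {m : ℕ} (p : Fin m → ℝ) (w b v : κ → ℝ) (ε : ℝ) : Set ℕ :=
  {ℓ | ∃ h : ℓ + 1 < m, ∃ j, 0 < v j ∧ 0 < ε * w j ∧
    ∃ t ∈ Set.Ioo (p ⟨ℓ, Nat.lt_of_succ_lt h⟩) (p ⟨ℓ + 1, h⟩), w j * t + b j = 0}

lemma setOf_nnet_lt_subset_kinkIntervals {k m : ℕ} {w b v : Fin k → ℝ} {p : Fin m → ℝ}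
    {c : ℝ} (hp : ∀ r, NNet w b v (p r) = c) :
    {ℓ : ℕ | ∃ h : ℓ + 1 < m, ∃ z ∈ Set.Icc (p ⟨ℓ, Nat.lt_of_succ_lt h⟩) (p ⟨ℓ + 1, h⟩),
      NNet w b v z < c} ⊆ kinkIntervals p w b v 1 ∪ kinkIntervals p w b v (-1) := by
  rintro ℓ ⟨h, z, hz, hNz⟩
  obtain ⟨j, hv, hwj, t, ht, hkink⟩ :=
    exists_kink_of_nnet_lt_min hz (by rwa [hp, hp, min_self])
  rcases hwj.lt_or_gt with hneg | hpos
  · exact .inr ⟨h, j, hv, by linarith, t, ht, hkink⟩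
  · exact .inl ⟨h, j, hv, by linarith, t, ht, hkink⟩

lemma kinkIntervals_subsingleton {ι κ : Type*} [Fintype ι] {x y lam : ι → ℝ}
    {w b v : κ → ℝ} {sg : ι → κ → ℝ} {m : ℕ} {p : Fin m → ℝ}
    (hlam : ∀ i, 0 ≤ lam i)
    (hsgp : ∀ i j, 0 < w j * x i + b j → sg i j = 1)
    (hsgn : ∀ i j, w j * x i + b j < 0 → sg i j = 0)
    (hw : ∀ j, v j ≠ 0 → w j = ∑ i, lam i * y i * v j * sg i j * x i)
    (hb : ∀ j, v j ≠ 0 → b j = ∑ i, lam i * y i * v j * sg i j)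
    (hp : Monotone p) (hp₀ : ∀ r, 0 ≤ p r) (hy : ∀ r r' i, p r ≤ x i → x i ≤ p r' → y i = -1)
    (hfree : ∀ ℓ (h : ℓ + 1 < m) i,
      p ⟨ℓ, Nat.lt_of_succ_lt h⟩ < x i → x i < p ⟨ℓ + 1, h⟩ → lam i = 0)
    (ε : ℝ) : (kinkIntervals p w b v ε).Subsingleton := by
  intro ℓ hℓ ℓ' hℓ'
  by_contra hne
  wlog hlt : ℓ < ℓ' generalizing ℓ ℓ'
  · exact this hℓ' hℓ (Ne.symm hne) (by omega)
  obtain ⟨h, j, hv, hεw, t, ⟨ht₁, ht₂⟩, hkink⟩ := hℓ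
  obtain ⟨h', j', hv', hεw', t', ⟨ht₁', ht₂'⟩, hkink'⟩ := hℓ'
  have hgap : p ⟨ℓ + 1, h⟩ ≤ p ⟨ℓ', Nat.lt_of_succ_lt h'⟩ := hp (Fin.mk_le_mk.2 hlt)
  refine false_of_two_kinks_of_same_sign hlam hsgp hsgn hw hb ((hp₀ _).trans_lt ht₁)
    (by linarith) (fun i hi => hy ⟨ℓ, Nat.lt_of_succ_lt h⟩ ⟨ℓ' + 1, h'⟩ i (by linarith [hi.1])
      (by linarith [hi.2]))
    (fun i hi => ?_) hv hkink hv' hkink' (pos_of_mul_pos_right ?_ (sq_nonneg ε))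
  · rcases hi with hi | hi
    · exact hfree ℓ h i (hi ▸ ht₁) (hi ▸ ht₂)
    · exact hfree ℓ' h' i (hi ▸ ht₁') (hi ▸ ht₂')
  · nlinarith [mul_pos hεw hεw']

theorem stmt7_general {n k : ℕ} (x y : Fin n → ℝ)
    (hx : StrictMono x)
    (w b v : Fin k → ℝ) (hKKT : IsKKT x y w b v)
    (a c : Fin n) (ha : 0 ≤ x a)
    (hyac : ∀ i, a ≤ i → i ≤ c → y i = -1)
    (m : ℕ) (idx : Fin m → Fin n) (hmono : StrictMono idx)
    (hrange : ∀ i : Fin n,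
      (a ≤ i ∧ i ≤ c ∧ y i * NNet w b v (x i) = 1) ↔ i ∈ Set.range idx) :
    {ℓ : ℕ | ∃ h : ℓ + 1 < m,
      ∃ z ∈ Set.Icc (x (idx ⟨ℓ, Nat.lt_of_succ_lt h⟩)) (x (idx ⟨ℓ + 1, h⟩)),
        NNet w b v z < -1}.encard ≤ 2 := by
  obtain ⟨-, lam, sg, hlam, -, hsgp, hsgn, hcomp, hw, hb⟩ := hKKT
  have hmargin : ∀ r, a ≤ idx r ∧ idx r ≤ c ∧ NNet w b v (x (idx r)) = -1 := fun r => by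
    obtain ⟨har, hrc, hN⟩ := (hrange (idx r)).2 ⟨r, rfl⟩
    rw [hyac _ har hrc] at hN
    exact ⟨har, hrc, by linarith⟩
  have hbetween : ∀ r r' i, x (idx r) ≤ x i → x i ≤ x (idx r') → a ≤ i ∧ i ≤ c :=
    fun r r' i h₁ h₂ => ⟨(hmargin r).1.trans (hx.le_iff_le.1 h₁),
      (hx.le_iff_le.1 h₂).trans (hmargin r').2.1⟩
  have hfree : ∀ ℓ (h : ℓ + 1 < m) i, x (idx ⟨ℓ, Nat.lt_of_succ_lt h⟩) < x i →
      x i < x (idx ⟨ℓ + 1, h⟩) → lam i = 0 := by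
    refine fun ℓ h i h₁ h₂ => hcomp i fun hi => ?_
    obtain ⟨r, rfl⟩ := (hrange i).1 ⟨(hbetween _ _ i h₁.le h₂.le).1,
      (hbetween _ _ i h₁.le h₂.le).2, hi⟩
    exact (hx.comp hmono).apply_notMem_Ioo_succ h r ⟨h₁, h₂⟩
  have hT := kinkIntervals_subsingleton (p := x ∘ idx) hlam hsgp hsgn hw hb
    (hx.comp hmono).monotone (fun r => ha.trans (hx.monotone (hmargin r).1))
    (fun r r' i h₁ h₂ => hyac i (hbetween r r' i h₁ h₂).1 (hbetween r r' i h₁ h₂).2) hfree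
  calc _ ≤ (kinkIntervals (x ∘ idx) w b v 1 ∪ kinkIntervals (x ∘ idx) w b v (-1)).encard :=
        Set.encard_mono (setOf_nnet_lt_subset_kinkIntervals fun r => (hmargin r).2.2)
    _ ≤ 1 + 1 := (Set.encard_union_le _ _).trans
        (add_le_add (Set.encard_le_one_iff_subsingleton.2 (hT 1))
          (Set.encard_le_one_iff_subsingleton.2 (hT (-1))))
    _ = 2 := by norm_num

/-- With `y_i = -1` on `[a, c]` and `ℐ'_{a,c} = {i : a ≤ i ≤ c, y_i N_θ(x_i) = 1}`
enumerated by the strictly monotone `idx : Fin m → Fin n`, there are at most `2` indices `ℓ`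
such that `N_θ(z) < -1` for some `z ∈ [x_{i_ℓ}, x_{i_{ℓ+1}}]`. -/
theorem stmt7 {n k : ℕ} (x y : Fin n → ℝ)
    (hx : StrictMono x) (hy : ∀ i, y i = 1 ∨ y i = -1)
    (w b v : Fin k → ℝ) (hKKT : IsKKT x y w b v)
    (a c : Fin n) (hac : a < c) (ha : 0 ≤ x a) (hxac : x a < x c)
    (hyac : ∀ i, a ≤ i → i ≤ c → y i = -1)
    (m : ℕ) (idx : Fin m → Fin n) (hmono : StrictMono idx)
    (hrange : ∀ i : Fin n,
      (a ≤ i ∧ i ≤ c ∧ y i * NNet w b v (x i) = 1) ↔ i ∈ Set.range idx) :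
    {ℓ : ℕ | ∃ h : ℓ + 1 < m,
      ∃ z ∈ Set.Icc (x (idx ⟨ℓ, Nat.lt_of_succ_lt h⟩)) (x (idx ⟨ℓ + 1, h⟩)),
        NNet w b v z < -1}.encard ≤ 2 :=
  stmt7_general x y hx w b v hKKT a c ha hyac m idx hmono hrange
end

section
/- Let S = {(x_i, y_i)}_{i=1}^n ⊆ ℝ × {−1,1} be a dataset with x_1 < x_2 < … < x_n, and suppose θ = (w, b, v) satisfies the KKT conditions of the maximum-margin problem for a width-k depth-2 ReLU network on S. Let 1 ≤ a < b ≤ n be such that x_b > x_a ≥ 0 and y_i = −1 for all a ≤ i ≤ b, and let ℐ'_{a,b} = {i : a ≤ i ≤ b, y_i N_θ(x_i) = 1} be enumerated as i_1 < … < i_m. Then there are at most 5 indices ℓ ∈ [m−1] such that N_θ(x) > −1 for some x ∈ [x_{i_ℓ}, x_{i_{ℓ+1}}]. -/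
open Finset

lemma relu_right_lin (W B c : ℝ) :
    ∃ δ > 0, ∀ h : ℝ, 0 ≤ h → h ≤ δ →
      relu (W * (c + h) + B)
        = relu (W * c + B)
          + (if 0 < W * c + B ∨ (W * c + B = 0 ∧ 0 < W) then W else 0) * h := by
  rcases lt_trichotomy (W * c + B) 0 with hs | hs | hs
  · refine ⟨-(W * c + B) / (2 * |W| + 1),
      div_pos (by linarith) (by positivity), fun h h0 hδ => ?_⟩
    have hW1 : W * h ≤ |W| * h := mul_le_mul_of_nonneg_right (le_abs_self W) h0
    have hkey : h * (2 * |W| + 1) ≤ -(W * c + B) := (le_div_iff₀ (by positivity)).mp hδ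
    have habs : 0 ≤ |W| := abs_nonneg W
    have hneg : W * (c + h) + B < 0 := by nlinarith
    have hcond : ¬ (0 < W * c + B ∨ (W * c + B = 0 ∧ 0 < W)) := by
      rintro (h1 | ⟨h1, _⟩) <;> linarith
    rw [if_neg hcond]
    have : relu (W * (c + h) + B) = 0 := max_eq_left hneg.le
    have h2 : relu (W * c + B) = 0 := max_eq_left hs.le
    rw [this, h2]; ring
  · refine ⟨1, one_pos, fun h h0 _ => ?_⟩
    have he : W * (c + h) + B = W * h := by rw [mul_add]; linarith
    have h2 : relu (W * c + B) = 0 := by rw [hs]; simp [relu]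
    rcases lt_or_ge 0 W with hW | hW
    · rw [if_pos (Or.inr ⟨hs, hW⟩), he, h2]
      have : relu (W * h) = W * h := max_eq_right (by positivity)
      rw [this]; ring
    · have hcond : ¬ (0 < W * c + B ∨ (W * c + B = 0 ∧ 0 < W)) := by
        rintro (h1 | ⟨_, h1⟩) <;> linarith
      rw [if_neg hcond, he, h2]
      have : relu (W * h) = 0 := max_eq_left (mul_nonpos_of_nonpos_of_nonneg hW h0)
      rw [this]; ring
  · refine ⟨(W * c + B) / (2 * |W| + 1),
      div_pos (by linarith) (by positivity), fun h h0 hδ => ?_⟩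
    have hW1 : -(|W| * h) ≤ W * h := by
      have := mul_le_mul_of_nonneg_right (neg_abs_le W) h0
      linarith
    have hkey : h * (2 * |W| + 1) ≤ W * c + B := (le_div_iff₀ (by positivity)).mp hδ
    have habs : 0 ≤ |W| := abs_nonneg W
    have hpos : 0 < W * (c + h) + B := by nlinarith
    rw [if_pos (Or.inl hs)]
    have e1 : relu (W * (c + h) + B) = W * (c + h) + B := max_eq_right hpos.le
    have e2 : relu (W * c + B) = W * c + B := max_eq_right hs.le
    rw [e1, e2]; ring

lemma relu_left_lin (W B c : ℝ) :
    ∃ δ > 0, ∀ h : ℝ, 0 ≤ h → h ≤ δ →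
      relu (W * (c - h) + B)
        = relu (W * c + B)
          - (if 0 < W * c + B ∨ (W * c + B = 0 ∧ W < 0) then W else 0) * h := by
  obtain ⟨δ, hδpos, hδ⟩ := relu_right_lin (-W) B (-c)
  refine ⟨δ, hδpos, fun h h0 hh => ?_⟩
  have := hδ h h0 hh
  have e1 : -W * (-c + h) + B = W * (c - h) + B := by ring
  have e2 : -W * -c + B = W * c + B := by ring
  rw [e1, e2] at this
  simp only [neg_pos] at this
  by_cases hC : 0 < W * c + B ∨ (W * c + B = 0 ∧ W < 0)
  · rw [this, if_pos hC, if_pos hC]; ring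
  · rw [this, if_neg hC, if_neg hC]; ring

lemma nnet_right_lin {k : ℕ} (w b v : Fin k → ℝ) (c : ℝ) :
    ∃ δ > 0, ∀ h : ℝ, 0 ≤ h → h ≤ δ →
      NNet w b v (c + h)
        = NNet w b v c
          + (∑ j, v j * (if 0 < w j * c + b j ∨ (w j * c + b j = 0 ∧ 0 < w j)
              then w j else 0)) * h := by
  have H : ∀ j : Fin k, ∃ δ > 0, ∀ h : ℝ, 0 ≤ h → h ≤ δ →
      relu (w j * (c + h) + b j)
        = relu (w j * c + b j)
          + (if 0 < w j * c + b j ∨ (w j * c + b j = 0 ∧ 0 < w j) then w j else 0) * h :=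
    fun j => relu_right_lin (w j) (b j) c
  choose δf hδfpos hδf using H
  rcases isEmpty_or_nonempty (Fin k) with hE | hNe
  · exact ⟨1, one_pos, fun h _ _ => by simp [NNet]⟩
  · refine ⟨Finset.univ.inf' Finset.univ_nonempty δf,
      (Finset.lt_inf'_iff _).mpr fun j _ => hδfpos j, fun h h0 hh => ?_⟩
    unfold NNet
    rw [Finset.sum_mul, ← Finset.sum_add_distrib]
    refine Finset.sum_congr rfl fun j _ => ?_
    rw [hδf j h h0 (le_trans hh (Finset.inf'_le _ (Finset.mem_univ j)))]
    ring

lemma nnet_left_lin {k : ℕ} (w b v : Fin k → ℝ) (c : ℝ) :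
    ∃ δ > 0, ∀ h : ℝ, 0 ≤ h → h ≤ δ →
      NNet w b v (c - h)
        = NNet w b v c
          - (∑ j, v j * (if 0 < w j * c + b j ∨ (w j * c + b j = 0 ∧ w j < 0)
              then w j else 0)) * h := by
  have H : ∀ j : Fin k, ∃ δ > 0, ∀ h : ℝ, 0 ≤ h → h ≤ δ →
      relu (w j * (c - h) + b j)
        = relu (w j * c + b j)
          - (if 0 < w j * c + b j ∨ (w j * c + b j = 0 ∧ w j < 0) then w j else 0) * h :=
    fun j => relu_left_lin (w j) (b j) c
  choose δf hδfpos hδf using H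
  rcases isEmpty_or_nonempty (Fin k) with hE | hNe
  · exact ⟨1, one_pos, fun h _ _ => by simp [NNet]⟩
  · refine ⟨Finset.univ.inf' Finset.univ_nonempty δf,
      (Finset.lt_inf'_iff _).mpr fun j _ => hδfpos j, fun h h0 hh => ?_⟩
    unfold NNet
    rw [Finset.sum_mul, ← Finset.sum_sub_distrib]
    refine Finset.sum_congr rfl fun j _ => ?_
    rw [hδf j h h0 (le_trans hh (Finset.inf'_le _ (Finset.mem_univ j)))]
    ring

lemma nnet_continuous {k : ℕ} (w b v : Fin k → ℝ) : Continuous (NNet w b v) := by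
  unfold NNet relu
  exact continuous_finset_sum _ fun j _ =>
    continuous_const.mul (continuous_const.max ((continuous_const.mul continuous_id).add
      continuous_const))

lemma valley {k : ℕ} (w b v : Fin k → ℝ) {z1 z2 ζ : ℝ}
    (h12 : z1 < z2) (hζ1 : z1 ≤ ζ) (hζ2 : ζ ≤ z2)
    (hf1 : -1 < NNet w b v z1) (hf2 : -1 < NNet w b v z2)
    (hfζ : NNet w b v ζ ≤ -1) :
    ∃ u, z1 < u ∧ u < z2 ∧ ∃ j, 0 < v j ∧ w j ≠ 0 ∧ w j * u + b j = 0 := by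
  have hcont : Continuous (NNet w b v) := nnet_continuous w b v
  obtain ⟨c0, hc0mem, hc0min⟩ := isCompact_Icc.exists_isMinOn
    (Set.nonempty_Icc.mpr h12.le) hcont.continuousOn
  have hmin : ∀ t, z1 ≤ t → t ≤ z2 → NNet w b v c0 ≤ NNet w b v t := fun t ht1 ht2 =>
    isMinOn_iff.mp hc0min t ⟨ht1, ht2⟩
  have hSne : (Set.Icc z1 z2 ∩ NNet w b v ⁻¹' {NNet w b v c0}).Nonempty := ⟨c0, hc0mem, rfl⟩
  have hSbdd : BddAbove (Set.Icc z1 z2 ∩ NNet w b v ⁻¹' {NNet w b v c0}) :=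
    ⟨z2, fun t ht => ht.1.2⟩
  have hSclosed : IsClosed (Set.Icc z1 z2 ∩ NNet w b v ⁻¹' {NNet w b v c0}) :=
    IsClosed.inter isClosed_Icc (isClosed_singleton.preimage hcont)
  obtain ⟨u, ⟨huIcc, hfu⟩, hub⟩ :
      ∃ u, u ∈ Set.Icc z1 z2 ∩ NNet w b v ⁻¹' {NNet w b v c0} ∧
        ∀ t ∈ Set.Icc z1 z2 ∩ NNet w b v ⁻¹' {NNet w b v c0}, t ≤ u :=
    ⟨_, hSclosed.csSup_mem hSne hSbdd, fun t ht => le_csSup hSbdd ht⟩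
  have hfu : NNet w b v u = NNet w b v c0 := hfu
  have hfu_le : NNet w b v u ≤ -1 := by
    rw [hfu]; exact le_trans (hmin ζ hζ1 hζ2) hfζ
  have hu1 : z1 < u := lt_of_le_of_ne huIcc.1 (by rintro rfl; linarith)
  have hu2 : u < z2 := lt_of_le_of_ne huIcc.2 (by rintro rfl; linarith)
  have hright : ∀ t, u < t → t ≤ z2 → NNet w b v u < NNet w b v t := by
    intro t ht1 ht2
    rcases lt_or_eq_of_le (hfu ▸ hmin t (le_trans huIcc.1 ht1.le) ht2) with h | h
    · exact h
    · exfalso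
      have ht : t ∈ Set.Icc z1 z2 ∩ NNet w b v ⁻¹' {NNet w b v c0} :=
        ⟨⟨le_trans huIcc.1 ht1.le, ht2⟩, by simp [← h, hfu]⟩
      exact absurd (hub t ht) (not_le.mpr ht1)
  have hleft : ∀ t, z1 ≤ t → t ≤ z2 → NNet w b v u ≤ NNet w b v t :=
    fun t h1 h2 => hfu ▸ hmin t h1 h2
  obtain ⟨δR, hδRpos, hR⟩ := nnet_right_lin w b v u
  obtain ⟨δL, hδLpos, hL⟩ := nnet_left_lin w b v u
  have hRpos : 0 < ∑ j, v j * (if 0 < w j * u + b j ∨ (w j * u + b j = 0 ∧ 0 < w j)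
      then w j else 0) := by
    have h0pos : 0 < min δR (z2 - u) := lt_min hδRpos (by linarith)
    have e := hR (min δR (z2 - u)) h0pos.le (min_le_left _ _)
    have hlt : NNet w b v u < NNet w b v (u + min δR (z2 - u)) :=
      hright _ (by linarith) (by have := min_le_right δR (z2 - u); linarith)
    rw [e] at hlt
    nlinarith
  have hLnonpos : (∑ j, v j * (if 0 < w j * u + b j ∨ (w j * u + b j = 0 ∧ w j < 0)
      then w j else 0)) ≤ 0 := by
    have h1pos : 0 < min δL (u - z1) := lt_min hδLpos (by linarith)
    have e := hL (min δL (u - z1)) h1pos.le (min_le_left _ _)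
    have hle : NNet w b v u ≤ NNet w b v (u - min δL (u - z1)) :=
      hleft _ (by have := min_le_right δL (u - z1); linarith) (by linarith)
    rw [e] at hle
    nlinarith
  have hdiff : 0 < ∑ j, v j * (if w j * u + b j = 0 then |w j| else 0) := by
    have e : (∑ j, v j * (if 0 < w j * u + b j ∨ (w j * u + b j = 0 ∧ 0 < w j)
          then w j else 0))
        - (∑ j, v j * (if 0 < w j * u + b j ∨ (w j * u + b j = 0 ∧ w j < 0)
          then w j else 0))
        = ∑ j, v j * (if w j * u + b j = 0 then |w j| else 0) := by
      rw [← Finset.sum_sub_distrib]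
      refine Finset.sum_congr rfl fun j _ => ?_
      rcases lt_trichotomy (w j * u + b j) 0 with h | h | h
      · rw [if_neg (by rintro (h1 | ⟨h1, _⟩) <;> linarith),
          if_neg (by rintro (h1 | ⟨h1, _⟩) <;> linarith), if_neg (by linarith)]
        ring
      · rcases lt_trichotomy (w j) 0 with hw | hw | hw
        · rw [if_neg (by rintro (h1 | ⟨_, h1⟩) <;> linarith), if_pos (Or.inr ⟨h, hw⟩),
            if_pos h, abs_of_neg hw]
          ring
        · rw [if_neg (by rintro (h1 | ⟨_, h1⟩) <;> linarith),
            if_neg (by rintro (h1 | ⟨_, h1⟩) <;> linarith), if_pos h, hw]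
          simp
        · rw [if_pos (Or.inr ⟨h, hw⟩), if_neg (by rintro (h1 | ⟨_, h1⟩) <;> linarith),
            if_pos h, abs_of_pos hw]
          ring
      · rw [if_pos (Or.inl h), if_pos (Or.inl h), if_neg (by linarith)]
        ring
    linarith
  have hex : ∃ j, 0 < v j * (if w j * u + b j = 0 then |w j| else 0) := by
    by_contra hcon
    push_neg at hcon
    have := Finset.sum_nonpos (fun j (_ : j ∈ Finset.univ) => hcon j)
    linarith
  obtain ⟨j, hj⟩ := hex
  by_cases hcase : w j * u + b j = 0
  · rw [if_pos hcase] at hj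
    have hwne : w j ≠ 0 := by
      intro h0; rw [h0] at hj; simp at hj
    have hvpos : 0 < v j := by
      rcases mul_pos_iff.mp hj with ⟨h1, _⟩ | ⟨_, h2⟩
      · exact h1
      · exact absurd h2 (not_lt.mpr (abs_nonneg _))
    exact ⟨u, hu1, hu2, j, hvpos, hwne, hcase⟩
  · rw [if_neg hcase] at hj; simp at hj

lemma key_identity {n k : ℕ} (x y : Fin n → ℝ) (w b v : Fin k → ℝ)
    (lam : Fin n → ℝ) (sg : Fin n → Fin k → ℝ)
    (hw : ∀ j, v j ≠ 0 → w j = ∑ i, lam i * y i * v j * sg i j * x i)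
    (hb : ∀ j, v j ≠ 0 → b j = ∑ i, lam i * y i * v j * sg i j)
    (j : Fin k) (hv : v j ≠ 0) (z : ℝ) :
    v j * (∑ i, lam i * y i * sg i j * (x i * z + 1)) = w j * z + b j := by
  rw [hw j hv, hb j hv, Finset.mul_sum, Finset.sum_mul, ← Finset.sum_add_distrib]
  exact Finset.sum_congr rfl fun i _ => by ring

/-- Two convex kinks with positive input weight at distinct nonnegative points,
with all data between them labelled `-1` and nonnegative, are impossible. -/
lemma keyR {n k : ℕ} (x y : Fin n → ℝ) (w b v : Fin k → ℝ)
    (lam : Fin n → ℝ) (sg : Fin n → Fin k → ℝ)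
    (hlam : ∀ i, 0 ≤ lam i)
    (hsg : ∀ i j, sg i j ∈ Set.Icc (0 : ℝ) 1)
    (hsg1 : ∀ i j, 0 < w j * x i + b j → sg i j = 1)
    (hsg0 : ∀ i j, w j * x i + b j < 0 → sg i j = 0)
    (hw : ∀ j, v j ≠ 0 → w j = ∑ i, lam i * y i * v j * sg i j * x i)
    (hb : ∀ j, v j ≠ 0 → b j = ∑ i, lam i * y i * v j * sg i j)
    (j j' : Fin k) (u u' : ℝ)
    (hvj : 0 < v j) (hvj' : 0 < v j') (hwj : 0 < w j) (hwj' : 0 < w j')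
    (hu : w j * u + b j = 0) (hu' : w j' * u' + b j' = 0)
    (huu : u < u') (hu0 : 0 ≤ u)
    (hy : ∀ i, u ≤ x i → x i ≤ u' → y i = -1 ∧ 0 ≤ x i) : False := by
  have hu'0 : 0 ≤ u' := le_trans hu0 huu.le
  have hT' : (∑ i, lam i * y i * sg i j' * (x i * u' + 1)) = 0 := by
    have h1 := key_identity x y w b v lam sg hw hb j' hvj'.ne' u'
    rw [hu'] at h1
    exact (mul_eq_zero.mp h1).resolve_left hvj'.ne'
  have hT : 0 < ∑ i, lam i * y i * sg i j * (x i * u' + 1) := by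
    have h1 := key_identity x y w b v lam sg hw hb j hvj.ne' u'
    have h2 : 0 < w j * u' + b j := by nlinarith
    by_contra hc
    push_neg at hc
    nlinarith [mul_nonneg hvj.le (neg_nonneg.mpr hc)]
  have hle : (∑ i, lam i * y i * sg i j * (x i * u' + 1))
      ≤ ∑ i, lam i * y i * sg i j' * (x i * u' + 1) := by
    refine Finset.sum_le_sum fun i _ => ?_
    rcases lt_trichotomy (x i) u with hxi | hxi | hxi
    · have e1 : sg i j = 0 := hsg0 i j (by nlinarith)
      have e2 : sg i j' = 0 := hsg0 i j' (by nlinarith)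
      rw [e1, e2]
    · rcases hy i (le_of_eq hxi.symm) (by linarith) with ⟨hyi, hxi0⟩
      have e2 : sg i j' = 0 := hsg0 i j' (by nlinarith)
      have hsgj := hsg i j
      rw [e2, hyi]
      have hA : 0 ≤ x i * u' + 1 := by nlinarith
      nlinarith [hlam i, hsgj.1, mul_nonneg (mul_nonneg (hlam i) hsgj.1) hA]
    · rcases lt_trichotomy (x i) u' with hxi' | hxi' | hxi'
      · rcases hy i hxi.le hxi'.le with ⟨hyi, hxi0⟩
        have e2 : sg i j' = 0 := hsg0 i j' (by nlinarith)
        have hsgj := hsg i j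
        rw [e2, hyi]
        have hA : 0 ≤ x i * u' + 1 := by nlinarith
        nlinarith [hlam i, hsgj.1, mul_nonneg (mul_nonneg (hlam i) hsgj.1) hA]
      · rcases hy i hxi.le (le_of_eq hxi') with ⟨hyi, hxi0⟩
        have e1 : sg i j = 1 := hsg1 i j (by nlinarith)
        have hsgj' := hsg i j'
        rw [e1, hyi]
        have hA : 0 ≤ x i * u' + 1 := by nlinarith
        nlinarith [hlam i, hsgj'.2, mul_nonneg (hlam i) hA]
      · have e1 : sg i j = 1 := hsg1 i j (by nlinarith)
        have e2 : sg i j' = 1 := hsg1 i j' (by nlinarith)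
        rw [e1, e2]
  linarith

/-- Two convex kinks with negative input weight at distinct nonnegative points,
with all data between them labelled `-1` and nonnegative, are impossible. -/
lemma keyL {n k : ℕ} (x y : Fin n → ℝ) (w b v : Fin k → ℝ)
    (lam : Fin n → ℝ) (sg : Fin n → Fin k → ℝ)
    (hlam : ∀ i, 0 ≤ lam i)
    (hsg : ∀ i j, sg i j ∈ Set.Icc (0 : ℝ) 1)
    (hsg1 : ∀ i j, 0 < w j * x i + b j → sg i j = 1)
    (hsg0 : ∀ i j, w j * x i + b j < 0 → sg i j = 0)
    (hw : ∀ j, v j ≠ 0 → w j = ∑ i, lam i * y i * v j * sg i j * x i)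
    (hb : ∀ j, v j ≠ 0 → b j = ∑ i, lam i * y i * v j * sg i j)
    (j j' : Fin k) (u u' : ℝ)
    (hvj : 0 < v j) (hvj' : 0 < v j') (hwj : w j < 0) (hwj' : w j' < 0)
    (hu : w j * u + b j = 0) (hu' : w j' * u' + b j' = 0)
    (huu : u < u') (hu0 : 0 ≤ u)
    (hy : ∀ i, u ≤ x i → x i ≤ u' → y i = -1 ∧ 0 ≤ x i) : False := by
  have hT : (∑ i, lam i * y i * sg i j * (x i * u + 1)) = 0 := by
    have h1 := key_identity x y w b v lam sg hw hb j hvj.ne' u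
    rw [hu] at h1
    exact (mul_eq_zero.mp h1).resolve_left hvj.ne'
  have hT' : 0 < ∑ i, lam i * y i * sg i j' * (x i * u + 1) := by
    have h1 := key_identity x y w b v lam sg hw hb j' hvj'.ne' u
    have h2 : 0 < w j' * u + b j' := by nlinarith
    by_contra hc
    push_neg at hc
    nlinarith [mul_nonneg hvj'.le (neg_nonneg.mpr hc)]
  have hle : (∑ i, lam i * y i * sg i j' * (x i * u + 1))
      ≤ ∑ i, lam i * y i * sg i j * (x i * u + 1) := by
    refine Finset.sum_le_sum fun i _ => ?_
    rcases lt_trichotomy (x i) u with hxi | hxi | hxi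
    · have e1 : sg i j = 1 := hsg1 i j (by nlinarith)
      have e2 : sg i j' = 1 := hsg1 i j' (by nlinarith)
      rw [e1, e2]
    · rcases hy i (le_of_eq hxi.symm) (by linarith) with ⟨hyi, hxi0⟩
      have e2 : sg i j' = 1 := hsg1 i j' (by nlinarith)
      have hsgj := hsg i j
      rw [e2, hyi]
      have hA : 0 ≤ x i * u + 1 := by nlinarith
      nlinarith [hlam i, hsgj.2, mul_nonneg (hlam i) hA]
    · rcases lt_trichotomy (x i) u' with hxi' | hxi' | hxi'
      · rcases hy i hxi.le hxi'.le with ⟨hyi, hxi0⟩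
        have e1 : sg i j = 0 := hsg0 i j (by nlinarith)
        have e2 : sg i j' = 1 := hsg1 i j' (by nlinarith)
        rw [e1, e2, hyi]
        have hA : 0 ≤ x i * u + 1 := by nlinarith
        nlinarith [hlam i, mul_nonneg (hlam i) hA]
      · rcases hy i hxi.le (le_of_eq hxi') with ⟨hyi, hxi0⟩
        have e1 : sg i j = 0 := hsg0 i j (by nlinarith)
        have hsgj' := hsg i j'
        rw [e1, hyi]
        have hA : 0 ≤ x i * u + 1 := by nlinarith
        nlinarith [hlam i, hsgj'.1, mul_nonneg (mul_nonneg (hlam i) hsgj'.1) hA]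
      · have e1 : sg i j = 0 := hsg0 i j (by nlinarith)
        have e2 : sg i j' = 0 := hsg0 i j' (by nlinarith)
        rw [e1, e2]
  linarith


/-- With `y_i = -1` on `[a, c]` and `ℐ'_{a,c} = {i : a ≤ i ≤ c, y_i N_θ(x_i) = 1}`
enumerated by the strictly monotone `idx : Fin m → Fin n`, there are at most `5` indices `ℓ`
such that `N_θ(z) > -1` for some `z ∈ [x_{i_ℓ}, x_{i_{ℓ+1}}]`. -/
theorem stmt8 {n k : ℕ} (x y : Fin n → ℝ)
    (hx : StrictMono x) (hy : ∀ i, y i = 1 ∨ y i = -1)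
    (w b v : Fin k → ℝ) (hKKT : IsKKT x y w b v)
    (a c : Fin n) (hac : a < c) (ha : 0 ≤ x a) (hxac : x a < x c)
    (hyac : ∀ i, a ≤ i → i ≤ c → y i = -1)
    (m : ℕ) (idx : Fin m → Fin n) (hmono : StrictMono idx)
    (hrange : ∀ i : Fin n,
      (a ≤ i ∧ i ≤ c ∧ y i * NNet w b v (x i) = 1) ↔ i ∈ Set.range idx) :
    {ℓ : ℕ | ∃ h : ℓ + 1 < m,
      ∃ z ∈ Set.Icc (x (idx ⟨ℓ, Nat.lt_of_succ_lt h⟩)) (x (idx ⟨ℓ + 1, h⟩)),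
        -1 < NNet w b v z}.encard ≤ 5 := by
  obtain ⟨hfeas, lam, sg, hlam, hsg, hsg1, hsg0, hcomp, hw, hb⟩ := hKKT
  by_contra hcon
  push_neg at hcon
  have h4 : (4 : ℕ∞) ≤ {ℓ : ℕ | ∃ h : ℓ + 1 < m,
      ∃ z ∈ Set.Icc (x (idx ⟨ℓ, Nat.lt_of_succ_lt h⟩)) (x (idx ⟨ℓ + 1, h⟩)),
        -1 < NNet w b v z}.encard :=
    le_of_lt (lt_of_le_of_lt (by norm_num) hcon)
  obtain ⟨T, hTS, hT4⟩ := Set.exists_subset_encard_eq h4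
  have hTfin : T.Finite := Set.finite_of_encard_eq_coe (k := 4) (by exact_mod_cast hT4)
  have hcard : hTfin.toFinset.card = 4 := by
    have h1 := hTfin.encard_eq_coe_toFinset_card
    rw [hT4] at h1
    exact_mod_cast h1.symm
  set e := hTfin.toFinset.orderIsoOfFin hcard with he
  have hmem : ∀ t : Fin 4, ((e t : ℕ) ∈ {ℓ : ℕ | ∃ h : ℓ + 1 < m,
      ∃ z ∈ Set.Icc (x (idx ⟨ℓ, Nat.lt_of_succ_lt h⟩)) (x (idx ⟨ℓ + 1, h⟩)),
        -1 < NNet w b v z}) := by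
    intro t
    exact hTS (hTfin.mem_toFinset.mp (e t).2)
  have hlt : ∀ s t : Fin 4, s < t → ((e s : ℕ) < (e t : ℕ)) := by
    intro s t hst
    exact_mod_cast e.strictMono hst
  -- tightness at enumerated points
  have htight : ∀ r : Fin m, NNet w b v (x (idx r)) = -1 := by
    intro r
    obtain ⟨h1, h2, h3⟩ := (hrange (idx r)).mpr ⟨r, rfl⟩
    rw [hyac _ h1 h2] at h3
    linarith
  have hxa_le : ∀ r : Fin m, x a ≤ x (idx r) := by
    intro r
    exact hx.monotone ((hrange (idx r)).mpr ⟨r, rfl⟩).1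
  have hxc_ge : ∀ r : Fin m, x (idx r) ≤ x c := by
    intro r
    exact hx.monotone ((hrange (idx r)).mpr ⟨r, rfl⟩).2.1
  -- extract bump data
  obtain ⟨hm0, z0, ⟨hz0l, hz0r⟩, hN0⟩ := hmem 0
  obtain ⟨hm1, z1, ⟨hz1l, hz1r⟩, hN1⟩ := hmem 1
  obtain ⟨hm2, z2, ⟨hz2l, hz2r⟩, hN2⟩ := hmem 2
  obtain ⟨hm3, z3, ⟨hz3l, hz3r⟩, hN3⟩ := hmem 3
  -- ordering facts
  have hq0 : NNet w b v (x (idx ⟨(e 0 : ℕ) + 1, hm0⟩)) = -1 := htight _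
  have hq1 : NNet w b v (x (idx ⟨(e 1 : ℕ) + 1, hm1⟩)) = -1 := htight _
  have hq2 : NNet w b v (x (idx ⟨(e 2 : ℕ) + 1, hm2⟩)) = -1 := htight _
  have hz0q0 : z0 < x (idx ⟨(e 0 : ℕ) + 1, hm0⟩) :=
    lt_of_le_of_ne hz0r (fun h => by rw [h, hq0] at hN0; linarith)
  have hz1q1 : z1 < x (idx ⟨(e 1 : ℕ) + 1, hm1⟩) :=
    lt_of_le_of_ne hz1r (fun h => by rw [h, hq1] at hN1; linarith)
  have hz2q2 : z2 < x (idx ⟨(e 2 : ℕ) + 1, hm2⟩) :=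
    lt_of_le_of_ne hz2r (fun h => by rw [h, hq2] at hN2; linarith)
  have hQP01 : x (idx ⟨(e 0 : ℕ) + 1, hm0⟩) ≤ x (idx ⟨(e 1 : ℕ), Nat.lt_of_succ_lt hm1⟩) :=
    hx.monotone (hmono.monotone (Fin.mk_le_mk.mpr (hlt 0 1 (by decide))))
  have hQP12 : x (idx ⟨(e 1 : ℕ) + 1, hm1⟩) ≤ x (idx ⟨(e 2 : ℕ), Nat.lt_of_succ_lt hm2⟩) :=
    hx.monotone (hmono.monotone (Fin.mk_le_mk.mpr (hlt 1 2 (by decide))))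
  have hQP23 : x (idx ⟨(e 2 : ℕ) + 1, hm2⟩) ≤ x (idx ⟨(e 3 : ℕ), Nat.lt_of_succ_lt hm3⟩) :=
    hx.monotone (hmono.monotone (Fin.mk_le_mk.mpr (hlt 2 3 (by decide))))
  have hq0z1 : x (idx ⟨(e 0 : ℕ) + 1, hm0⟩) ≤ z1 := le_trans hQP01 hz1l
  have hq1z2 : x (idx ⟨(e 1 : ℕ) + 1, hm1⟩) ≤ z2 := le_trans hQP12 hz2l
  have hq2z3 : x (idx ⟨(e 2 : ℕ) + 1, hm2⟩) ≤ z3 := le_trans hQP23 hz3l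
  -- valleys
  obtain ⟨u0, hu0a, hu0b, j0, hvj0, hwj0, hbrk0⟩ :=
    valley w b v (lt_of_lt_of_le hz0q0 hq0z1) hz0q0.le hq0z1 hN0 hN1 (le_of_eq hq0)
  obtain ⟨u1, hu1a, hu1b, j1, hvj1, hwj1, hbrk1⟩ :=
    valley w b v (lt_of_lt_of_le hz1q1 hq1z2) hz1q1.le hq1z2 hN1 hN2 (le_of_eq hq1)
  obtain ⟨u2, hu2a, hu2b, j2, hvj2, hwj2, hbrk2⟩ :=
    valley w b v (lt_of_lt_of_le hz2q2 hq2z3) hz2q2.le hq2z3 hN2 hN3 (le_of_eq hq2)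
  have hu01 : u0 < u1 := lt_trans hu0b hu1a
  have hu12 : u1 < u2 := lt_trans hu1b hu2a
  -- window facts
  have hxa_z0 : x a ≤ z0 := le_trans (hxa_le _) hz0l
  have hz3_xc : z3 ≤ x c := le_trans hz3r (hxc_ge _)
  have hu0z0 : z0 < u0 := hu0a
  have hu2z3 : u2 < z3 := hu2b
  have hycond : ∀ (uu uu' : ℝ), z0 ≤ uu → uu' ≤ z3 →
      ∀ i, uu ≤ x i → x i ≤ uu' → y i = -1 ∧ 0 ≤ x i := by
    intro uu uu' h1 h2 i hi1 hi2
    have hxi_a : x a ≤ x i := le_trans (le_trans hxa_z0 h1) hi1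
    have hxi_c : x i ≤ x c := le_trans hi2 (le_trans h2 hz3_xc)
    exact ⟨hyac i (hx.le_iff_le.mp hxi_a) (hx.le_iff_le.mp hxi_c), le_trans ha hxi_a⟩
  have hpair : ∀ (j j' : Fin k) (uu uu' : ℝ), 0 < v j → 0 < v j' →
      w j ≠ 0 → w j' ≠ 0 → ((0 < w j) ↔ (0 < w j')) →
      w j * uu + b j = 0 → w j' * uu' + b j' = 0 →
      uu < uu' → z0 ≤ uu → uu' ≤ z3 → False := by
    intro j j' uu uu' hv hv' hwne hwne' hiff hbu hbu' huu hlb hub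
    have hupos : 0 ≤ uu := le_trans (le_trans ha hxa_z0) hlb
    rcases lt_or_gt_of_ne hwne with hneg | hpos
    · have hneg' : w j' < 0 := by
        rcases lt_or_gt_of_ne hwne' with h | h
        · exact h
        · exact absurd (hiff.mpr h) (not_lt.mpr hneg.le)
      exact keyL x y w b v lam sg hlam hsg hsg1 hsg0 hw hb j j' uu uu'
        hv hv' hneg hneg' hbu hbu' huu hupos (hycond uu uu' hlb hub)
    · have hpos' : 0 < w j' := hiff.mp hpos
      exact keyR x y w b v lam sg hlam hsg hsg1 hsg0 hw hb j j' uu uu'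
        hv hv' hpos hpos' hbu hbu' huu hupos (hycond uu uu' hlb hub)
  -- pigeonhole on the signs of w j0, w j1, w j2
  have hb01 : z0 ≤ u0 := hu0a.le
  have hb12 : z0 ≤ u1 := le_trans hu0a.le hu01.le
  have hub1 : u1 ≤ z3 := le_trans hu12.le hu2b.le
  have hub2 : u2 ≤ z3 := hu2b.le
  rcases lt_or_gt_of_ne hwj0 with h0 | h0 <;>
    rcases lt_or_gt_of_ne hwj1 with h1 | h1 <;>
      rcases lt_or_gt_of_ne hwj2 with h2 | h2
  · exact hpair j0 j1 u0 u1 hvj0 hvj1 hwj0 hwj1 (by constructor <;> intro h <;> linarith)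
      hbrk0 hbrk1 hu01 hb01 hub1
  · exact hpair j0 j1 u0 u1 hvj0 hvj1 hwj0 hwj1 (by constructor <;> intro h <;> linarith)
      hbrk0 hbrk1 hu01 hb01 hub1
  · exact hpair j0 j2 u0 u2 hvj0 hvj2 hwj0 hwj2 (by constructor <;> intro h <;> linarith)
      hbrk0 hbrk2 (lt_trans hu01 hu12) hb01 hub2
  · exact hpair j1 j2 u1 u2 hvj1 hvj2 hwj1 hwj2 (by constructor <;> intro h <;> linarith)
      hbrk1 hbrk2 hu12 hb12 hub2
  · exact hpair j1 j2 u1 u2 hvj1 hvj2 hwj1 hwj2 (by constructor <;> intro h <;> linarith)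
      hbrk1 hbrk2 hu12 hb12 hub2
  · exact hpair j0 j2 u0 u2 hvj0 hvj2 hwj0 hwj2 (by constructor <;> intro h <;> linarith)
      hbrk0 hbrk2 (lt_trans hu01 hu12) hb01 hub2
  · exact hpair j0 j1 u0 u1 hvj0 hvj1 hwj0 hwj1 (by constructor <;> intro h <;> linarith)
      hbrk0 hbrk1 hu01 hb01 hub1
  · exact hpair j0 j1 u0 u1 hvj0 hvj1 hwj0 hwj1 (by constructor <;> intro h <;> linarith)
      hbrk0 hbrk1 hu01 hb01 hub1
end

section
/- Let d ≥ 1 and let A ∈ {0,1}^{d×d} be a matrix whose first row is the all-ones vector, and each subsequent row i (2 ≤ i ≤ d) is either of the form (1,…,1,0,…,0) with exactly i−1 leading ones, or of the form (0,…,0,1,…,1) with exactly i−1 leading zeros. Then A is invertible and the spectral norm (operator norm induced by the Euclidean norm) of A⁻¹ satisfies ‖A⁻¹‖ ≤ d. -/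
/-!
Row `0` of `A` is `u_d` and every other row `k` is `u_k` or `u_d - u_k`, where `u_k = 1[j < k]`;
hence every `u_k` is `e_kᵀ A` or `(e_0 - e_k)ᵀ A`. As `e_i = u_{i+1} - u_i`, this gives an explicit
left inverse `B` of `A` with all entries in `[-1, 1]`, and the spectral norm of `A⁻¹ = B` is at most
its Frobenius norm, which is at most `d`.
-/

open Matrix

theorem Matrix.norm_toEuclideanCLM_le_sqrt_sum_sq {n : Type*} [Fintype n] [DecidableEq n]
    (B : Matrix n n ℝ) :
    ‖toEuclideanCLM (𝕜 := ℝ) (n := n) B‖ ≤ √(∑ i, ∑ j, B i j ^ 2) := by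
  refine ContinuousLinearMap.opNorm_le_bound _ (Real.sqrt_nonneg _) fun x => ?_
  simp only [EuclideanSpace.norm_eq, Real.norm_eq_abs, sq_abs, ofLp_toEuclideanCLM]
  rw [← Real.sqrt_mul (by positivity)]
  refine Real.sqrt_le_sqrt ?_
  rw [Finset.sum_mul]
  exact Finset.sum_le_sum fun i _ => Finset.sum_mul_sq_le_sq_mul_sq _ _ _

section PrefixRows

variable {d : ℕ}

def prefixIndicator (k : ℕ) (j : Fin d) : ℝ := if (j : ℕ) < k then 1 else 0

def natSingle (k : ℕ) (l : Fin d) : ℝ := if (l : ℕ) = k then 1 else 0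

theorem natSingle_vecMul {k : ℕ} (hk : k < d) (A : Matrix (Fin d) (Fin d) ℝ) :
    natSingle k ᵥ* A = A ⟨k, hk⟩ := by
  have : natSingle k = Pi.single (⟨k, hk⟩ : Fin d) (1 : ℝ) := by
    ext l
    simp [natSingle, Pi.single_apply, Fin.ext_iff]
  rw [this, single_vecMul, one_smul]
  rfl

theorem natSingle_eq_zero_of_le {k : ℕ} (hk : d ≤ k) : natSingle (d := d) k = 0 := by
  ext l
  simp [natSingle, (l.isLt.trans_le hk).ne]

def IsPrefixRow (A : Matrix (Fin d) (Fin d) ℝ) (k : ℕ) : Prop :=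
  ∃ i : Fin d, (i : ℕ) = k ∧ A i = prefixIndicator k

open Classical in
/-- Coefficients of the rows of `A` that combine to `prefixIndicator k`. The second branch,
`e₀ - eₖ`, also covers `k = 0` (giving `0`) and `k ≥ d` (giving `e₀`, as `natSingle k = 0`). -/
noncomputable def prefixCoeff (A : Matrix (Fin d) (Fin d) ℝ) (k : ℕ) : Fin d → ℝ :=
  if IsPrefixRow A k then natSingle k else natSingle 0 - natSingle k

noncomputable def prefixInv (A : Matrix (Fin d) (Fin d) ℝ) : Matrix (Fin d) (Fin d) ℝ :=
  of fun i => prefixCoeff A (i + 1) - prefixCoeff A i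

theorem abs_prefixInv_apply_le (A : Matrix (Fin d) (Fin d) ℝ) (i j : Fin d) :
    |prefixInv A i j| ≤ 1 := by
  -- column `j ≠ 0` only meets `e_i` and `e_{i+1}`; column `0` is a difference of two `{0, 1}` values
  simp only [prefixInv, prefixCoeff, of_apply, Pi.sub_apply, apply_ite (fun f : Fin d → ℝ => f j),
    natSingle]
  split_ifs <;> first | omega | norm_num

variable (hd : 1 ≤ d) (A : Matrix (Fin d) (Fin d) ℝ)
    (hfirst : ∀ j, A ⟨0, hd⟩ j = 1)
    (hrow : ∀ i : Fin d, (i : ℕ) ≠ 0 →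
      (∀ j, A i j = if (j : ℕ) < (i : ℕ) then 1 else 0) ∨
      (∀ j, A i j = if (j : ℕ) < (i : ℕ) then 0 else 1))
include hfirst hrow

theorem prefixCoeff_vecMul (k : ℕ) : prefixCoeff A k ᵥ* A = prefixIndicator k := by
  by_cases hpre : IsPrefixRow A k
  · obtain ⟨i, rfl, hi⟩ := hpre
    rw [prefixCoeff, if_pos ⟨i, rfl, hi⟩, natSingle_vecMul i.isLt]
    exact hi
  rw [prefixCoeff, if_neg hpre, sub_vecMul, natSingle_vecMul hd]
  ext j
  rcases Nat.eq_zero_or_pos k with rfl | hk0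
  · simp [natSingle_vecMul hd, prefixIndicator]
  rcases le_or_gt d k with hdk | hkd
  · simp [natSingle_eq_zero_of_le hdk, hfirst, prefixIndicator, j.isLt.trans_le hdk]
  rcases hrow ⟨k, hkd⟩ hk0.ne' with hpre' | hsuf
  · exact absurd ⟨⟨k, hkd⟩, rfl, funext hpre'⟩ hpre
  · simp only [natSingle_vecMul hkd, Pi.sub_apply, hfirst, hsuf, prefixIndicator]
    split_ifs <;> norm_num

theorem prefixInv_mul : prefixInv A * A = 1 := by
  ext i j
  have hBi : prefixInv A i = prefixCoeff A (i + 1) - prefixCoeff A i := rfl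
  rw [mul_apply_eq_vecMul, hBi, sub_vecMul,
    prefixCoeff_vecMul hd A hfirst hrow, prefixCoeff_vecMul hd A hfirst hrow]
  simp only [Pi.sub_apply, prefixIndicator, one_apply, Fin.ext_iff]
  split_ifs <;> first | omega | norm_num

end PrefixRows

/-- If `A` is a `d × d` `{0,1}`-matrix (`d ≥ 1`) whose first row is all ones
and whose row `i` (for `i ≥ 2`, i.e. index `i ≠ 0`) is either `(1,…,1,0,…,0)` with `i - 1`
leading ones or `(0,…,0,1,…,1)` with `i - 1` leading zeros, then `A` is invertible and the
spectral norm of `A⁻¹` is at most `d`. -/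
theorem stmt10 {d : ℕ} (hd : 1 ≤ d) (A : Matrix (Fin d) (Fin d) ℝ)
    (hfirst : ∀ j, A ⟨0, hd⟩ j = 1)
    (hrow : ∀ i : Fin d, (i : ℕ) ≠ 0 →
      (∀ j, A i j = if (j : ℕ) < (i : ℕ) then 1 else 0) ∨
      (∀ j, A i j = if (j : ℕ) < (i : ℕ) then 0 else 1)) :
    IsUnit A ∧ ‖(Matrix.toEuclideanCLM (𝕜 := ℝ) (n := Fin d)) A⁻¹‖ ≤ d := by
  have hleft := prefixInv_mul hd A hfirst hrow
  refine ⟨(isUnit_iff_isUnit_det A).mpr (isUnit_det_of_left_inverse hleft), ?_⟩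
  rw [inv_eq_left_inv hleft]
  calc ‖toEuclideanCLM (𝕜 := ℝ) (n := Fin d) (prefixInv A)‖
      ≤ √(∑ i, ∑ j, prefixInv A i j ^ 2) := norm_toEuclideanCLM_le_sqrt_sum_sq _
    _ ≤ √(∑ _i : Fin d, ∑ _j : Fin d, 1) := by
      gcongr with i _ j _
      exact (sq_le_one_iff_abs_le_one _).mpr (abs_prefixInv_apply_le A i j)
    _ = d := by simp
end

section
/- Let r ≥ 1 be an integer, let f_r(x) = sign(sin(0.5·π·(r+1)·(x+1))) where sign(z) = 1 if z > 0 and −1 otherwise, and let ℓ be either the exponential loss ℓ(q) = e^{−q} or the logistic loss ℓ(q) = log(1+e^{−q}). Let β₁ ≤ β₂ be points in [−1,1] and let N : [β₁,β₂] → ℝ be a function whose sign is fixed on [β₁,β₂] (i.e., sign(N(x)) is the same for all x ∈ [β₁,β₂]). Then ∫_{β₁}^{β₂} ℓ(N(x)·f_r(x)) dx ≥ ½·ℓ(0)·(β₂ − β₁ − 2/(r+1)). -/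
/-!
With `s` the common sign of `N`, the integrand is at least `ℓ(0)` wherever `s` and
`sin(π(r+1)(x+1)/2)` have opposite signs, because `ℓ` is decreasing. The sine changes sign under
the shift by `p = 2/(r+1)`, so this shift maps the points of `[β₁, β₂ - p]` where the signs agree
onto points where they disagree; up to the null zero set of the sine, the "disagree" set
therefore has measure at least `(β₂ - β₁ - p)/2`.
-/

open MeasureTheory

noncomputable def sgn (z : ℝ) : ℝ := if 0 < z then 1 else -1

noncomputable def fr (r : ℕ) (x : ℝ) : ℝ :=
  sgn (Real.sin (0.5 * Real.pi * (r + 1) * (x + 1)))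

open Set Real

theorem sgn_ne_zero (z : ℝ) : sgn z ≠ 0 := by
  unfold sgn
  split_ifs <;> norm_num

theorem mul_sgn_nonpos_of_sgn_mul_neg {a b : ℝ} (h : sgn a * b < 0) : a * sgn b ≤ 0 := by
  unfold sgn at *
  split_ifs at * <;> nlinarith

theorem antitone_exp_neg : Antitone fun q : ℝ => exp (-q) :=
  fun _ _ h => exp_le_exp.mpr (neg_le_neg h)

theorem antitone_log_one_add_exp_neg : Antitone fun q : ℝ => log (1 + exp (-q)) :=
  fun _ _ h => log_le_log (by positivity) (add_le_add_right (antitone_exp_neg h) 1)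

theorem volume_setOf_sin_mul_add_eq_zero {c : ℝ} (hc : c ≠ 0) (d : ℝ) :
    volume {x : ℝ | sin (c * (x + d)) = 0} = 0 := by
  refine measure_mono_null (fun x hx => ?_)
    ((countable_range fun n : ℤ => n * π / c - d).measure_zero _)
  obtain ⟨n, hn⟩ := sin_eq_zero_iff.mp hx
  exact ⟨n, by field_simp; linarith⟩

theorem ofReal_half_sub_le_volume_Icc_inter_neg {g : ℝ → ℝ} {p : ℝ} (hp : 0 ≤ p)
    (hanti : ∀ x, g (x + p) = -g x) (hzero : volume {x | g x = 0} = 0) (a b : ℝ) :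
    ENNReal.ofReal ((b - a - p) / 2) ≤ volume (Icc a b ∩ {x | g x < 0}) := by
  set B := Icc a b ∩ {x | g x < 0}
  have hcover : Icc a b ⊆ B ∪ ((· + p) ⁻¹' B ∪ Ioc (b - p) b) ∪ {x | g x = 0} := by
    intro x hx
    rcases lt_trichotomy (g x) 0 with hneg | hz | hpos
    · exact Or.inl (Or.inl ⟨hx, hneg⟩)
    · exact Or.inr hz
    · by_cases hxp : x + p ≤ b
      · refine Or.inl (Or.inr (Or.inl ⟨⟨by linarith [hx.1], hxp⟩, ?_⟩))
        simp only [mem_ofPred_eq, hanti]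
        linarith
      · exact Or.inl (Or.inr (Or.inr ⟨by linarith, hx.2⟩))
  have hvol : ENNReal.ofReal (b - a) ≤ 2 * volume B + ENNReal.ofReal p := calc
    ENNReal.ofReal (b - a) = volume (Icc a b) := Real.volume_Icc.symm
    _ ≤ volume (B ∪ ((· + p) ⁻¹' B ∪ Ioc (b - p) b)) + volume {x | g x = 0} :=
        (measure_mono hcover).trans (measure_union_le _ _)
    _ ≤ volume B + (volume ((· + p) ⁻¹' B) + volume (Ioc (b - p) b)) := by
        rw [hzero, add_zero]
        exact (measure_union_le _ _).trans (add_le_add_right (measure_union_le _ _) _)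
    _ = 2 * volume B + ENNReal.ofReal p := by
        rw [measure_preimage_add_right, Real.volume_Ioc, sub_sub_cancel]
        ring
  rcases le_or_gt (b - a - p) 0 with hδ | hδ
  · simp [ENNReal.ofReal_of_nonpos (div_nonpos_of_nonpos_of_nonneg hδ zero_le_two)]
  have hsplit :
      ENNReal.ofReal (b - a) = 2 * ENNReal.ofReal ((b - a - p) / 2) + ENNReal.ofReal p := by
    rw [← ENNReal.ofReal_ofNat 2, ← ENNReal.ofReal_mul zero_le_two,
      ← ENNReal.ofReal_add (by linarith) hp]
    ring_nf
  rw [hsplit, ENNReal.add_le_add_iff_right ENNReal.ofReal_ne_top] at hvol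
  exact (ENNReal.mul_le_mul_iff_right two_ne_zero ENNReal.ofNat_ne_top).mp hvol

theorem ofReal_le_volume_Icc_inter_mul_sin_neg (r : ℕ) {s : ℝ} (hs : s ≠ 0) (a b : ℝ) :
    ENNReal.ofReal ((b - a - 2 / (r + 1)) / 2) ≤
      volume (Icc a b ∩ {x | s * sin (0.5 * π * (r + 1) * (x + 1)) < 0}) := by
  refine ofReal_half_sub_le_volume_Icc_inter_neg (by positivity) (fun x => ?_) ?_ a b
  · rw [show 0.5 * π * (r + 1) * (x + 2 / (r + 1) + 1) = 0.5 * π * (r + 1) * (x + 1) + π by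
      field_simp; ring, sin_add_pi, mul_neg]
  · refine measure_mono_null (fun x hx => (mul_eq_zero.mp hx).resolve_left hs)
      (volume_setOf_sin_mul_add_eq_zero (by positivity) 1)

theorem ofReal_le_setLIntegral_comp_mul_fr (r : ℕ) {l : ℝ → ℝ} (hl : Antitone l) (hl0 : 0 ≤ l 0)
    {a b : ℝ} {N : ℝ → ℝ} (hsign : ∀ x ∈ Icc a b, sgn (N x) = sgn (N a)) :
    ENNReal.ofReal (1 / 2 * l 0 * (b - a - 2 / (r + 1))) ≤
      ∫⁻ x in Icc a b, ENNReal.ofReal (l (N x * fr r x)) := by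
  set B := Icc a b ∩ {x | sgn (N a) * sin (0.5 * π * (r + 1) * (x + 1)) < 0}
  have hB : MeasurableSet B :=
    measurableSet_Icc.inter (measurableSet_lt (by fun_prop) measurable_const)
  have hloss : ∀ x ∈ B, ENNReal.ofReal (l 0) ≤ ENNReal.ofReal (l (N x * fr r x)) := by
    rintro x ⟨hx, hneg⟩
    refine ENNReal.ofReal_le_ofReal (hl (mul_sgn_nonpos_of_sgn_mul_neg ?_))
    rwa [hsign x hx]
  calc ENNReal.ofReal (1 / 2 * l 0 * (b - a - 2 / (r + 1)))
      = ENNReal.ofReal (l 0) * ENNReal.ofReal ((b - a - 2 / (r + 1)) / 2) := by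
        rw [← ENNReal.ofReal_mul hl0]
        ring_nf
    _ ≤ ENNReal.ofReal (l 0) * volume B :=
        mul_le_mul_right (ofReal_le_volume_Icc_inter_mul_sin_neg r (sgn_ne_zero _) a b) _
    _ = ∫⁻ _ in B, ENNReal.ofReal (l 0) := (setLIntegral_const _ _).symm
    _ ≤ ∫⁻ x in B, ENNReal.ofReal (l (N x * fr r x)) := setLIntegral_mono' hB hloss
    _ ≤ ∫⁻ x in Icc a b, ENNReal.ofReal (l (N x * fr r x)) := lintegral_mono_set inter_subset_left

theorem stmt11_general (r : ℕ) (l : ℝ → ℝ)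
    (hl : (∀ q, l q = Real.exp (-q)) ∨ (∀ q, l q = Real.log (1 + Real.exp (-q))))
    (β₁ β₂ : ℝ) (hβ : β₁ ≤ β₂)
    (N : ℝ → ℝ)
    (hsign : ∀ x ∈ Set.Icc β₁ β₂, ∀ x' ∈ Set.Icc β₁ β₂, sgn (N x) = sgn (N x')) :
    ENNReal.ofReal (1 / 2 * l 0 * (β₂ - β₁ - 2 / (r + 1))) ≤
      ∫⁻ x in Set.Icc β₁ β₂, ENNReal.ofReal (l (N x * fr r x)) := by
  obtain ⟨hanti, hl0⟩ : Antitone l ∧ 0 ≤ l 0 := by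
    rcases hl with hl | hl <;> rw [funext hl]
    · exact ⟨antitone_exp_neg, by positivity⟩
    · exact ⟨antitone_log_one_add_exp_neg, log_nonneg (by simp)⟩
  exact ofReal_le_setLIntegral_comp_mul_fr r hanti hl0 fun x hx => hsign x hx β₁ ⟨le_rfl, hβ⟩

/-- If `ℓ` is the exponential or logistic loss and `N` has a fixed sign on
`[β₁, β₂] ⊆ [-1, 1]`, then `∫_{β₁}^{β₂} ℓ(N(x) f_r(x)) dx ≥ ½ ℓ(0) (β₂ - β₁ - 2/(r+1))`
(stated with the lower Lebesgue integral). -/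
theorem stmt11 (r : ℕ) (hr : 1 ≤ r) (l : ℝ → ℝ)
    (hl : (∀ q, l q = Real.exp (-q)) ∨ (∀ q, l q = Real.log (1 + Real.exp (-q))))
    (β₁ β₂ : ℝ) (hβ : β₁ ≤ β₂) (hβ₁ : -1 ≤ β₁) (hβ₂ : β₂ ≤ 1)
    (N : ℝ → ℝ)
    (hsign : ∀ x ∈ Set.Icc β₁ β₂, ∀ x' ∈ Set.Icc β₁ β₂, sgn (N x) = sgn (N x')) :
    ENNReal.ofReal (1 / 2 * l 0 * (β₂ - β₁ - 2 / (r + 1))) ≤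
      ∫⁻ x in Set.Icc β₁ β₂, ENNReal.ofReal (l (N x * fr r x)) :=
  stmt11_general r l hl β₁ β₂ hβ N hsign
end

section
/- Let R ≥ 1, σ > 0, let a ∈ [0, R], and let ε > 0 satisfy ε ≤ R. Let w and b be independent centered Gaussian random variables, each with variance σ². Then the probability that both w ∈ (σ/R, 2σ/R) and −b/w ∈ (a, a + ε) is at least ε/(512·R⁴). -/
/-!
By independence the probability is `∫ μ(slice_w) dμ(w)`, where the slice at `w > 0` is the set
of biases `b` with `-b/w ∈ (a, a + ε)`, the interval `(-(a + ε)w, -aw)`. For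
`w ∈ (σ/R, 1.3σ/R)` the slice contains `(-(a + 3ε/5)w, -aw)`, of length at least `3εσ/(5R)` and
within `2.08σ` of the origin. Both Gaussian masses are bounded below by two-step lower Riemann
sums of the density (a single step loses too much of the constant), and the product of the two
bounds is about `ε / (467 R²) ≥ ε / (512 R⁴)`.
-/

open MeasureTheory ProbabilityTheory Real Set
open scoped ENNReal NNReal

lemma inv_lt_exp_neg {x M : ℝ} {n p : ℕ} (hM : 0 < M) (hx : n * x ≤ p)
    (h : (2.7182818286 : ℝ) ^ p < M ^ n) : M⁻¹ < exp (-x) := by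
  rw [exp_neg]
  refine inv_strictAnti₀ (exp_pos x) (lt_of_pow_lt_pow_left₀ n hM.le ?_)
  calc exp x ^ n = exp (n * x) := by rw [← exp_nat_mul]
    _ ≤ exp 1 ^ p := by rw [← exp_nat_mul, mul_one]; exact exp_le_exp.2 hx
    _ ≤ (2.7182818286 : ℝ) ^ p := pow_le_pow_left₀ (exp_pos 1).le exp_one_lt_d9.le p
    _ < M ^ n := h

section GaussianLowerBounds

variable {μ : ℝ} {v : ℝ≥0}

lemma ofReal_le_gaussianPDF (hv : v ≠ 0) {x K : ℝ} (hx : (x - μ) ^ 2 ≤ 2 * v * K) :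
    ENNReal.ofReal (exp (-K) / √(2 * π * v)) ≤ gaussianPDF μ v x := by
  rw [gaussianPDF, gaussianPDFReal, div_eq_inv_mul]
  gcongr
  rw [neg_div, neg_le_neg_iff, div_le_iff₀' (by positivity)]
  exact hx

lemma ofReal_mul_volume_le_gaussianReal (hv : v ≠ 0) {s : Set ℝ} {K : ℝ}
    (hs : ∀ x ∈ s, (x - μ) ^ 2 ≤ 2 * v * K) :
    ENNReal.ofReal (exp (-K) / √(2 * π * v)) * volume s ≤ gaussianReal μ v s := by
  rw [gaussianReal_apply μ hv, ← setLIntegral_const]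
  exact setLIntegral_mono (measurable_gaussianPDF μ v) fun x hx ↦
    ofReal_le_gaussianPDF hv (hs x hx)

lemma sq_sub_le_of_mem_Icc {u w x c C : ℝ} (hx : x ∈ Icc u w) (hu : (u - c) ^ 2 ≤ C)
    (hw : (w - c) ^ 2 ≤ C) : (x - c) ^ 2 ≤ C := by
  rcases le_total c x with h | h
  · nlinarith [hx.2]
  · nlinarith [hx.1]

lemma le_gaussianReal_Ioo_of_split (hv : v ≠ 0) {u m w K₁ K₂ : ℝ} (hum : u ≤ m)
    (hmw : m ≤ w) (hu : (u - μ) ^ 2 ≤ 2 * v * K₁) (hm₁ : (m - μ) ^ 2 ≤ 2 * v * K₁)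
    (hm₂ : (m - μ) ^ 2 ≤ 2 * v * K₂) (hw : (w - μ) ^ 2 ≤ 2 * v * K₂) :
    ENNReal.ofReal
        ((m - u) * (exp (-K₁) / √(2 * π * v)) + (w - m) * (exp (-K₂) / √(2 * π * v))) ≤
      gaussianReal μ v (Ioo u w) := by
  have hdisj : Disjoint (Ioo u m) (Ioo m w) := Ioo_disjoint_Ioo.2 (by simp)
  calc _ ≤ ENNReal.ofReal ((m - u) * (exp (-K₁) / √(2 * π * v)))
        + ENNReal.ofReal ((w - m) * (exp (-K₂) / √(2 * π * v))) := ENNReal.ofReal_add_le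
    _ = ENNReal.ofReal (exp (-K₁) / √(2 * π * v)) * volume (Ioo u m)
        + ENNReal.ofReal (exp (-K₂) / √(2 * π * v)) * volume (Ioo m w) := by
        rw [Real.volume_Ioo, Real.volume_Ioo, ← ENNReal.ofReal_mul (by positivity),
          ← ENNReal.ofReal_mul (by positivity), mul_comm (m - u), mul_comm (w - m)]
    _ ≤ gaussianReal μ v (Ioo u m) + gaussianReal μ v (Ioo m w) := by
        gcongr <;> refine ofReal_mul_volume_le_gaussianReal hv fun x hx ↦ ?_
        · exact sq_sub_le_of_mem_Icc (Ioo_subset_Icc_self hx) hu hm₁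
        · exact sq_sub_le_of_mem_Icc (Ioo_subset_Icc_self hx) hm₂ hw
    _ = gaussianReal μ v (Ioo u m ∪ Ioo m w) := (measure_union hdisj measurableSet_Ioo).symm
    _ ≤ gaussianReal μ v (Ioo u w) :=
        measure_mono (union_subset (Ioo_subset_Ioo_right hmw) (Ioo_subset_Ioo_left hum))

end GaussianLowerBounds

noncomputable def weightBound (R : ℝ) : ℝ :=
  3 / 20 / R * (exp (-(7 / 10)) + exp (-(17 / 20))) / √(2 * π)

noncomputable def biasBound (R ε : ℝ) : ℝ :=
  3 / 10 * ε / R * (exp (-(11 / 5)) + exp (-(29 / 20))) / √(2 * π)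

lemma mul_le_prod_apply {α β : Type*} [MeasurableSpace α] [MeasurableSpace β] {μ : Measure α}
    {ν : Measure β} [SFinite ν] {S : Set (α × β)} (hS : MeasurableSet S) {I : Set α}
    {c : ℝ≥0∞} (h : ∀ x ∈ I, c ≤ ν (Prod.mk x ⁻¹' S)) :
    μ I * c ≤ μ.prod ν S := by
  rw [Measure.prod_apply hS, mul_comm, ← setLIntegral_const]
  exact (setLIntegral_mono (measurable_measure_prodMk_left hS) h).trans
    (setLIntegral_le_lintegral _ _)

lemma neg_div_mem_Ioo_iff {a b c w : ℝ} (hw : 0 < w) :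
    -b / w ∈ Ioo a c ↔ b ∈ Ioo (-(c * w)) (-(a * w)) := by
  simp only [mem_Ioo, lt_div_iff₀ hw, div_lt_iff₀ hw]
  constructor <;> rintro ⟨h₁, h₂⟩ <;> constructor <;> linarith

lemma Ioo_subset_breakpoint_slice {σ R a ε w : ℝ} (hσ : 0 < σ) (hR : 0 < R) (hε : 0 < ε)
    (hw : w ∈ Ioo (σ / R) (13 / 10 * (σ / R))) :
    Ioo (-((a + 3 / 5 * ε) * w)) (-(a * w)) ⊆
      {b | w ∈ Ioo (σ / R) (2 * σ / R) ∧ -b / w ∈ Ioo a (a + ε)} := by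
  have hw₀ : 0 < w := (div_pos hσ hR).trans hw.1
  refine fun b hb ↦ ⟨⟨hw.1, hw.2.trans_le ?_⟩, ?_⟩
  · rw [mul_div_assoc]; gcongr; norm_num
  · refine (neg_div_mem_Ioo_iff hw₀).2 (Ioo_subset_Ioo_left ?_ hb)
    nlinarith

lemma ofReal_biasBound_le {σ R a ε w : ℝ} {v : ℝ≥0} (hv : (v : ℝ) = σ ^ 2) (hσ : 0 < σ)
    (hR : 0 < R) (ha : a ∈ Icc 0 R) (hε : 0 < ε) (hεR : ε ≤ R)
    (hw : w ∈ Ioo (σ / R) (13 / 10 * (σ / R))) :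
    ENNReal.ofReal (biasBound R ε) ≤
      gaussianReal 0 v (Ioo (-((a + 3 / 5 * ε) * w)) (-(a * w))) := by
  obtain ⟨ha₀, haR⟩ := ha
  obtain ⟨hσR, hRw⟩ := hw
  rw [div_lt_iff₀' hR] at hσR
  rw [← mul_div_assoc, lt_div_iff₀' hR] at hRw
  have hw₀ : 0 < w := pos_of_mul_pos_right (hσ.trans hσR) hR.le
  have hu : (a + 3 / 5 * ε) * w ≤ 104 / 50 * σ := by
    nlinarith [mul_le_mul_of_nonneg_right (show a + 3 / 5 * ε ≤ 8 / 5 * R by linarith) hw₀.le]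
  have hm : (a + 3 / 10 * ε) * w ≤ 169 / 100 * σ := by
    nlinarith [mul_le_mul_of_nonneg_right (show a + 3 / 10 * ε ≤ 13 / 10 * R by linarith)
      hw₀.le]
  have hv₀ : v ≠ 0 := by rw [← NNReal.coe_ne_zero, hv]; positivity
  refine le_trans ?_ (le_gaussianReal_Ioo_of_split (m := -((a + 3 / 10 * ε) * w))
    (K₁ := 11 / 5) (K₂ := 29 / 20) hv₀ ?_ ?_ ?_ ?_ ?_ ?_)
  · rw [biasBound, hv, sqrt_mul' _ (sq_nonneg σ), sqrt_sq hσ.le]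
    refine ENNReal.ofReal_le_ofReal ?_
    have hwσ : 1 / R ≤ w / σ := by rw [div_le_div_iff₀ hR hσ]; linarith
    calc 3 / 10 * ε / R * (exp (-(11 / 5)) + exp (-(29 / 20))) / √(2 * π)
        ≤ 3 / 10 * ε * (w / σ) * (exp (-(11 / 5)) + exp (-(29 / 20))) / √(2 * π) := by
          gcongr ?_ * _ / _
          rw [div_eq_mul_one_div]
          gcongr
      _ = _ := by field_simp; ring
  · nlinarith
  · nlinarith
  · rw [hv, sub_zero, neg_sq]; nlinarith [mul_self_le_mul_self (by positivity) hu]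
  · rw [hv, sub_zero, neg_sq]; nlinarith [mul_self_le_mul_self (by positivity) hm]
  · rw [hv, sub_zero, neg_sq]; nlinarith [mul_self_le_mul_self (by positivity) hm]
  · have haw : a * w ≤ 169 / 100 * σ := hm.trans' (by gcongr; linarith)
    rw [hv, sub_zero, neg_sq]; nlinarith [mul_self_le_mul_self (by positivity) haw]

lemma ofReal_weightBound_le {σ R : ℝ} {v : ℝ≥0} (hv : (v : ℝ) = σ ^ 2) (hσ : 0 < σ)
    (hR : 1 ≤ R) :
    ENNReal.ofReal (weightBound R) ≤
      gaussianReal 0 v (Ioo (σ / R) (13 / 10 * (σ / R))) := by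
  have hσR : σ / R ≤ σ := div_le_self hσ.le hR
  have hσR₀ : 0 < σ / R := by positivity
  have hv₀ : v ≠ 0 := by rw [← NNReal.coe_ne_zero, hv]; positivity
  refine le_trans ?_ (le_gaussianReal_Ioo_of_split (m := 23 / 20 * (σ / R))
    (K₁ := 7 / 10) (K₂ := 17 / 20) hv₀ ?_ ?_ ?_ ?_ ?_ ?_)
  · rw [weightBound, hv, sqrt_mul' _ (sq_nonneg σ), sqrt_sq hσ.le]
    refine ENNReal.ofReal_le_ofReal (le_of_eq ?_)
    field_simp
    ring
  · nlinarith
  · nlinarith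
  · rw [hv, sub_zero]; nlinarith
  · rw [hv, sub_zero]; nlinarith
  · rw [hv, sub_zero]; nlinarith
  · rw [hv, sub_zero]; nlinarith

lemma three_tenths_le_exp_sums :
    3 / 10 ≤ (exp (-(11 / 5)) + exp (-(29 / 20))) * (exp (-(7 / 10)) + exp (-(17 / 20))) := by
  have h₁ := inv_lt_exp_neg (x := 11 / 5) (n := 5) (p := 11) (M := 10)
    (by norm_num) (by norm_num) (by norm_num)
  have h₂ := inv_lt_exp_neg (x := 29 / 20) (n := 20) (p := 29) (M := 13 / 3)
    (by norm_num) (by norm_num) (by norm_num)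
  have h₃ := inv_lt_exp_neg (x := 7 / 10) (n := 10) (p := 7) (M := 101 / 50)
    (by norm_num) (by norm_num) (by norm_num)
  have h₄ := inv_lt_exp_neg (x := 17 / 20) (n := 20) (p := 17) (M := 117 / 50)
    (by norm_num) (by norm_num) (by norm_num)
  norm_num at h₁ h₂ h₃ h₄
  nlinarith

lemma div_le_weightBound_mul_biasBound {R ε : ℝ} (hR : 1 ≤ R) (hε : 0 < ε) :
    ε / (512 * R ^ 4) ≤ weightBound R * biasBound R ε := by
  have hR₀ : 0 < R := one_pos.trans_le hR
  calc ε / (512 * R ^ 4) ≤ ε / (512 * R ^ 2) := by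
        gcongr ε / (512 * ?_)
        exact pow_le_pow_right₀ hR (by norm_num)
    _ ≤ 9 / 200 * ε * (3 / 10) / (R ^ 2 * (2 * 3.15)) := by
        rw [div_le_div_iff₀ (by positivity) (by positivity)]; nlinarith [sq_nonneg R]
    _ ≤ 9 / 200 * ε * ((exp (-(11 / 5)) + exp (-(29 / 20))) *
          (exp (-(7 / 10)) + exp (-(17 / 20)))) / (R ^ 2 * (2 * π)) := by
        gcongr
        · exact three_tenths_le_exp_sums
        · exact pi_lt_d2.le
    _ = weightBound R * biasBound R ε := by
        rw [weightBound, biasBound]; field_simp; rw [sq_sqrt (by positivity)]; ring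

/-- Let `R ≥ 1`, `σ > 0`, `a ∈ [0, R]`, and `0 < ε ≤ R`. If `W` and `B` are
independent centered Gaussian random variables with variance `σ²`, then the probability that
`W ∈ (σ/R, 2σ/R)` and `-B/W ∈ (a, a + ε)` is at least `ε / (512 R⁴)`. -/
theorem stmt14 {Ω : Type*} [MeasureSpace Ω] [IsProbabilityMeasure (ℙ : Measure Ω)]
    (R σ a ε : ℝ) (hR : 1 ≤ R) (hσ : 0 < σ) (ha : a ∈ Set.Icc 0 R)
    (hε : 0 < ε) (hεR : ε ≤ R)
    (W B : Ω → ℝ) (hWm : Measurable W) (hBm : Measurable B)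
    (hindep : IndepFun W B)
    (hW : Measure.map W ℙ = gaussianReal 0 ⟨σ ^ 2, sq_nonneg σ⟩)
    (hB : Measure.map B ℙ = gaussianReal 0 ⟨σ ^ 2, sq_nonneg σ⟩) :
    ENNReal.ofReal (ε / (512 * R ^ 4)) ≤
      ℙ {ω | W ω ∈ Set.Ioo (σ / R) (2 * σ / R) ∧ -B ω / W ω ∈ Set.Ioo a (a + ε)} := by
  -- Instance search does not see through the variance `⟨σ ^ 2, _⟩`, so name it.
  obtain ⟨v, hv, hμ⟩ : ∃ v : ℝ≥0, (v : ℝ) = σ ^ 2 ∧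
      gaussianReal 0 ⟨σ ^ 2, sq_nonneg σ⟩ = gaussianReal 0 v := ⟨_, rfl, rfl⟩
  rw [hμ] at hW hB
  set μ := gaussianReal 0 v
  set S : Set (ℝ × ℝ) :=
    {p | p.1 ∈ Ioo (σ / R) (2 * σ / R) ∧ -p.2 / p.1 ∈ Ioo a (a + ε)}
  have hR₀ : 0 < R := one_pos.trans_le hR
  have hS : MeasurableSet S :=
    (measurable_fst measurableSet_Ioo).inter
      ((measurable_snd.neg.div measurable_fst) measurableSet_Ioo)
  have hslice : ∀ w ∈ Ioo (σ / R) (13 / 10 * (σ / R)),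
      ENNReal.ofReal (biasBound R ε) ≤ μ (Prod.mk w ⁻¹' S) := fun w hw ↦
    (ofReal_biasBound_le hv hσ hR₀ ha hε hεR hw).trans
      (measure_mono (Ioo_subset_breakpoint_slice hσ hR₀ hε hw))
  have hjoint : Measure.map (fun ω ↦ (W ω, B ω)) ℙ = μ.prod μ := by
    rw [(indepFun_iff_map_prod_eq_prod_map_map hWm.aemeasurable hBm.aemeasurable).1 hindep,
      hW, hB]
  calc ENNReal.ofReal (ε / (512 * R ^ 4))
      ≤ ENNReal.ofReal (weightBound R) * ENNReal.ofReal (biasBound R ε) := by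
        rw [← ENNReal.ofReal_mul (by unfold weightBound; positivity)]
        exact ENNReal.ofReal_le_ofReal (div_le_weightBound_mul_biasBound hR hε)
    _ ≤ μ (Ioo (σ / R) (13 / 10 * (σ / R))) * ENNReal.ofReal (biasBound R ε) := by
        gcongr
        exact ofReal_weightBound_le hv hσ hR
    _ ≤ μ.prod μ S := mul_le_prod_apply hS hslice
    _ = _ := by
        rw [← hjoint, Measure.map_apply (hWm.prodMk hBm) hS]
        rfl
end

section
/- For every natural number k ≥ 1 and every real x ∈ [0,1], (1−x)^k + k·(1−x)^{k−1}·x ≤ 2·(1 − x/2)^k. -/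
lemma aux16 (m : ℕ) (a t : ℝ) (ha : 0 ≤ a) (ht : 0 ≤ t) :
    a ^ (m + 1) + (m + 1 : ℝ) * a ^ m * t ≤ (a + t) ^ (m + 1) := by
  induction m with
  | zero => simp
  | succ n ih =>
    have h1 : (a + t) ^ (n + 2) = (a + t) ^ (n + 1) * (a + t) := by ring
    have h2 : (a ^ (n + 1) + (n + 1 : ℝ) * a ^ n * t) * (a + t)
        ≤ (a + t) ^ (n + 1) * (a + t) := by
      apply mul_le_mul_of_nonneg_right ih (by linarith)
    push_cast
    have key : (a ^ (n + 1) + ((n:ℝ) + 1) * a ^ n * t) * (a + t)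
        = a ^ (n+1+1) + ((n:ℝ) + 1 + 1) * a ^ (n+1) * t + ((n:ℝ)+1) * (a^n * t * t) := by
      ring
    have hnn : 0 ≤ ((n:ℝ)+1) * (a^n * t * t) := by positivity
    have h5 : (a+t)^(n+1+1) = (a+t)^(n+1)*(a+t) := by ring
    linarith

/-- For every natural `k ≥ 1` and real `x ∈ [0, 1]`,
`(1 - x)^k + k (1 - x)^{k-1} x ≤ 2 (1 - x/2)^k`. -/
theorem stmt16 (k : ℕ) (hk : 1 ≤ k) (x : ℝ) (hx : x ∈ Set.Icc (0 : ℝ) 1) :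
    (1 - x) ^ k + (k : ℝ) * (1 - x) ^ (k - 1) * x ≤ 2 * (1 - x / 2) ^ k := by
  obtain ⟨m, rfl⟩ : ∃ m, k = m + 1 := ⟨k - 1, (Nat.succ_pred_eq_of_pos hk).symm⟩
  obtain ⟨hx0, hx1⟩ := hx
  have ha : (0:ℝ) ≤ 1 - x := by linarith
  have ht : (0:ℝ) ≤ x / 2 := by linarith
  have h := aux16 m (1 - x) (x / 2) ha ht
  have hpow : (0:ℝ) ≤ (1 - x) ^ (m + 1) := pow_nonneg ha _
  have heq : (1 - x) + x / 2 = 1 - x / 2 := by ring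
  rw [heq] at h
  simp only [Nat.add_sub_cancel, Nat.cast_add, Nat.cast_one]
  nlinarith
end
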